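/- arXiv:1604.08473 — 9 statements merged into one kernel-verified Lean document; each statement's English description precedes it below -/
import Mathlib

section
/- Let (K,d) be a compact metric space, Y a real Banach space, and ι : Y → C(K,ℝ) a linear map whose range separates the points of K and for which there exists a real number α ≥ 0 with ‖ι(φ)‖_∞ ≤ α‖φ‖_Y for all φ ∈ Y. Let f : K → ℝ ∪ {+∞} be proper and lower semicontinuous. Then the set N(f) = {φ ∈ Y : the function x ↦ f(x) − ι(φ)(x) does not attain a strict minimum on K} is meagre (of the first Baire category) in Y; equivalently, the set of φ ∈ Y such that f − ι(φ) attains a strict minimum on K contains a dense Gδ subset of Y. -/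
open Filter Topology

private lemma ereal_sub_coe_ne_bot {a : EReal} (ha : a ≠ ⊥) (c : ℝ) : a - (c : ℝ) ≠ ⊥ := by
  induction a using EReal.rec with
  | bot => exact absurd rfl ha
  | coe r => rw [← EReal.coe_sub]; exact EReal.coe_ne_bot _
  | top => rw [EReal.top_sub_coe]; exact top_ne_bot

private lemma ereal_sub_coe_ne_top {a : EReal} (ha : a ≠ ⊤) (c : ℝ) : a - (c : ℝ) ≠ ⊤ := by
  induction a using EReal.rec with
  | bot => rw [EReal.bot_sub]; exact bot_ne_top
  | coe r => rw [← EReal.coe_sub]; exact EReal.coe_ne_top _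
  | top => exact absurd rfl ha

private lemma exists_min_ereal {K : Type*} [TopologicalSpace K] [CompactSpace K] [Nonempty K]
    {g : K → EReal} (hg : LowerSemicontinuous g) : ∃ x₀, ∀ x, g x₀ ≤ g x := by
  have hcl : ∀ y : K, IsClosed {x | g x ≤ g y} := fun y => hg.isClosed_preimage (g y)
  have hdir : Directed (· ⊇ ·) (fun y : K => {x | g x ≤ g y}) := by
    intro y z
    rcases le_total (g y) (g z) with h | h
    · exact ⟨y, fun x hx => hx, fun x (hx : g x ≤ g y) => le_trans hx h⟩
    · exact ⟨z, fun x (hx : g x ≤ g z) => le_trans hx h, fun x hx => hx⟩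
  obtain ⟨x₀, hx₀⟩ := IsCompact.nonempty_iInter_of_directed_nonempty_isCompact_isClosed
    (fun y : K => {x | g x ≤ g y}) hdir (fun y => ⟨y, show g y ≤ g y from le_rfl⟩)
    (fun y => (hcl y).isCompact) hcl
  exact ⟨x₀, fun y => Set.mem_iInter.mp hx₀ y⟩

private lemma isMeagre_of_closed_empty_interior {X : Type*} [TopologicalSpace X] {s : Set X}
    (hc : IsClosed s) (hi : interior s = ∅) : IsMeagre s :=
  isMeagre_iff_countable_union_isNowhereDense.mpr
    ⟨{s}, by simpa [hc.isNowhereDense_iff], Set.countable_singleton s, by simp⟩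

/-- **Key lemma (general case).** Let `(K,d)` be a compact metric space, `Y` a real Banach
space, and `ι : Y → C(K,ℝ)` a linear map whose range separates the points of `K` and which
satisfies `‖ι φ‖_∞ ≤ α ‖φ‖` for some `α ≥ 0`. Let `f : K → ℝ ∪ {+∞}` be proper and lower
semicontinuous. Then the set of `φ ∈ Y` such that `f - ι φ` does not attain a strict minimum
on `K` is meagre in `Y`. -/
theorem stmt_0 {K : Type*} [MetricSpace K] [CompactSpace K]
    {Y : Type*} [NormedAddCommGroup Y] [NormedSpace ℝ Y] [CompleteSpace Y]
    (ι : Y →ₗ[ℝ] C(K, ℝ))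
    (hsep : ∀ x y : K, x ≠ y → ∃ φ : Y, ι φ x ≠ ι φ y)
    (α : ℝ) (hα : 0 ≤ α) (hbound : ∀ φ : Y, ‖ι φ‖ ≤ α * ‖φ‖)
    (f : K → EReal) (hproper : ∃ x, f x ≠ ⊤) (hreal : ∀ x, f x ≠ ⊥)
    (hlsc : LowerSemicontinuous f) :
    IsMeagre {φ : Y | ¬ ∃ x₀ : K, ∀ x : K, x ≠ x₀ →
      f x₀ - (ι φ x₀ : ℝ) < f x - (ι φ x : ℝ)} := by
  classical
  obtain ⟨xbar, hxbar⟩ := hproper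
  haveI : Nonempty K := ⟨xbar⟩
  -- a countable separating family
  obtain ⟨T, hTc, hTU⟩ := TopologicalSpace.isOpen_iUnion_countable
      (fun φ : Y => {p : K × K | ι φ p.1 ≠ ι φ p.2})
      (fun φ => isOpen_ne_fun ((ι φ).continuous.comp continuous_fst)
        ((ι φ).continuous.comp continuous_snd))
  obtain ⟨e, hke⟩ : ∃ e : ℕ → Y, T ∪ {0} ⊆ Set.range e := by
    obtain ⟨e, he⟩ := Set.Countable.exists_eq_range
      (hTc.union (Set.countable_singleton 0)) (by simp)
    exact ⟨e, he.le⟩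
  have hsep' : ∀ x y : K, x ≠ y → ∃ n : ℕ, ι (e n) x ≠ ι (e n) y := by
    intro x y hxy
    obtain ⟨φ, hφ⟩ := hsep x y hxy
    have hx : (x, y) ∈ ⋃ φ' ∈ T, {p : K × K | ι φ' p.1 ≠ ι φ' p.2} := by
      rw [hTU]; exact Set.mem_iUnion.2 ⟨φ, hφ⟩
    simp only [Set.mem_iUnion, Set.mem_setOf_eq] at hx
    obtain ⟨w, hwT, hw⟩ := hx
    obtain ⟨n, rfl⟩ := hke (Set.mem_union_left _ hwT)
    exact ⟨n, hw⟩
  -- the perturbed functions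
  set g : Y → K → EReal := fun h x => f x - (ι h x : ℝ) with hg_def
  have hg_lsc : ∀ h, LowerSemicontinuous (g h) := by
    intro h
    have h1 : LowerSemicontinuous fun x => f x + (((-(ι h x)) : ℝ) : EReal) := by
      apply LowerSemicontinuous.add' hlsc
      · exact (continuous_coe_real_ereal.comp (ι h).continuous.neg).lowerSemicontinuous
      · intro x
        exact EReal.continuousAt_add (Or.inr (EReal.coe_ne_bot _)) (Or.inr (EReal.coe_ne_top _))
    simpa [hg_def, sub_eq_add_neg, EReal.coe_neg] using h1
  have hg_nebot : ∀ h x, g h x ≠ ⊥ := fun h x => ereal_sub_coe_ne_bot (hreal x) _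
  have hmin : ∀ h : Y, ∃ x₀, ∀ x, g h x₀ ≤ g h x := fun h => exists_min_ereal (hg_lsc h)
  choose xm hxm using hmin
  have hxm_netop : ∀ h, g h (xm h) ≠ ⊤ := by
    intro h htop
    have h1 := hxm h xbar
    rw [htop, top_le_iff] at h1
    exact ereal_sub_coe_ne_top hxbar _ h1
  -- the value function
  set v : Y → ℝ := fun h => (g h (xm h)).toReal with hv_def
  have hvcoe : ∀ h, g h (xm h) = ((v h : ℝ) : EReal) := fun h =>
    (EReal.coe_toReal (hxm_netop h) (hg_nebot h (xm h))).symm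
  -- key evaluation inequality at minimizers
  have hval : ∀ h x, g h x = ((v h : ℝ) : EReal) → ∀ h' : Y,
      v h' ≤ v h + (ι h x - ι h' x) := by
    intro h x hx h'
    have hne_top : f x ≠ ⊤ := by
      intro ht
      rw [hg_def] at hx
      simp only [ht, EReal.top_sub_coe] at hx
      exact (EReal.coe_ne_top _) hx.symm
    have hfx : f x = (((f x).toReal : ℝ) : EReal) := (EReal.coe_toReal hne_top (hreal x)).symm
    set r : ℝ := (f x).toReal with hr_def
    have hrx : r - ι h x = v h := by
      have h2 : ((r - ι h x : ℝ) : EReal) = ((v h : ℝ) : EReal) := by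
        rw [EReal.coe_sub, ← hfx]; exact hx
      exact_mod_cast h2
    have h1 : ((v h' : ℝ) : EReal) ≤ g h' x := by rw [← hvcoe h']; exact hxm h' x
    have h2 : g h' x = ((r - ι h' x : ℝ) : EReal) := by
      show f x - ((ι h' x : ℝ) : EReal) = _
      rw [hfx, ← EReal.coe_sub]
    rw [h2] at h1
    have h3 : v h' ≤ r - ι h' x := by exact_mod_cast h1
    linarith
  -- Lipschitz property of v
  have hlip : ∀ h₁ h₂ : Y, v h₁ ≤ v h₂ + α * ‖h₁ - h₂‖ := by
    intro h₁ h₂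
    have h1 := hval h₂ (xm h₂) (hvcoe h₂) h₁
    have h2 : ι h₂ (xm h₂) - ι h₁ (xm h₂) = (ι (h₂ - h₁)) (xm h₂) := by
      rw [map_sub]; simp [ContinuousMap.sub_apply]
    have h3 : (ι (h₂ - h₁)) (xm h₂) ≤ ‖ι (h₂ - h₁)‖ :=
      le_trans (le_abs_self _) ((ι (h₂ - h₁)).norm_coe_le_norm (xm h₂))
    have h4 : ‖ι (h₂ - h₁)‖ ≤ α * ‖h₂ - h₁‖ := hbound _
    rw [norm_sub_rev h₂ h₁] at h4
    linarith
  have hlip2 : ∀ h₁ h₂ : Y, |v h₁ - v h₂| ≤ α * ‖h₁ - h₂‖ := by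
    intro h₁ h₂
    rw [abs_sub_le_iff]
    constructor
    · linarith [hlip h₁ h₂]
    · have := hlip h₂ h₁; rw [norm_sub_rev] at this; linarith
  have hv_cont : Continuous v := by
    apply LipschitzWith.continuous (K := ⟨α, hα⟩)
    apply LipschitzWith.of_dist_le_mul
    intro a b
    rw [Real.dist_eq, dist_eq_norm]
    exact hlip2 a b
  -- the slope inequalities at minimizers
  have hQle : ∀ h w x (s : ℝ), 0 < s → g h x = ((v h : ℝ) : EReal) →
      (v (h + s • w) - v h) / s ≤ -(ι w x) := by
    intro h w x s hs hx
    rw [div_le_iff₀ hs]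
    have h1 := hval h x hx (h + s • w)
    have h2 : ι (h + s • w) x = ι h x + s * ι w x := by
      rw [map_add, map_smul]; simp [ContinuousMap.add_apply]
    rw [h2] at h1
    linarith
  have hQge : ∀ h w x (s' : ℝ), s' < 0 → g h x = ((v h : ℝ) : EReal) →
      -(ι w x) ≤ (v (h + s' • w) - v h) / s' := by
    intro h w x s' hs' hx
    rw [le_div_iff_of_neg hs']
    have h1 := hval h x hx (h + s' • w)
    have h2 : ι (h + s' • w) x = ι h x + s' * ι w x := by
      rw [map_add, map_smul]; simp [ContinuousMap.add_apply]
    rw [h2] at h1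
    linarith
  -- the bad closed sets
  set C : ℕ → ℕ → Set Y := fun n k => {h | ∀ s s' : ℝ, 0 < s → s' < 0 →
      1 / ((k : ℝ) + 1) ≤ (v (h + s' • e n) - v h) / s' - (v (h + s • e n) - v h) / s}
    with hC_def
  have hC_closed : ∀ n k, IsClosed (C n k) := by
    intro n k
    have hrw : C n k = ⋂ (s : ℝ) (s' : ℝ) (_ : 0 < s) (_ : s' < 0),
        {h : Y | 1 / ((k : ℝ) + 1) ≤
          (v (h + s' • e n) - v h) / s' - (v (h + s • e n) - v h) / s} := by
      ext h
      simp only [hC_def, Set.mem_setOf_eq, Set.mem_iInter]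
    rw [hrw]
    refine isClosed_iInter fun s => isClosed_iInter fun s' =>
      isClosed_iInter fun _ => isClosed_iInter fun _ => ?_
    apply isClosed_le continuous_const
    apply Continuous.sub
    · exact ((hv_cont.comp (continuous_id.add continuous_const)).sub hv_cont).div_const _
    · exact ((hv_cont.comp (continuous_id.add continuous_const)).sub hv_cont).div_const _
  -- the bad sets have empty interior
  have hC_int : ∀ n k, interior (C n k) = ∅ := by
    intro n k
    rw [Set.eq_empty_iff_forall_notMem]
    intro h₀ hh₀
    obtain ⟨ρ, hρ, hball⟩ := Metric.mem_nhds_iff.mp (mem_interior_iff_mem_nhds.mp hh₀)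
    set w : Y := e n with hw_def
    set m₀ : ℕ := ⌈2 * α * ‖w‖ * ((k : ℝ) + 1)⌉₊ with hm₀_def
    set M : ℕ := m₀ + 2 with hM_def
    set η : ℝ := ρ / (M * (‖w‖ + 1)) with hη_def
    have hMpos : (0 : ℝ) < M := by positivity
    have hη : 0 < η := by
      apply div_pos hρ
      positivity
    have hmemball : ∀ i : ℕ, (i : ℝ) ≤ M → h₀ + ((i : ℝ) * η) • w ∈ Metric.ball h₀ ρ := by
      intro i hi
      rw [Metric.mem_ball, dist_eq_norm, add_sub_cancel_left, norm_smul, Real.norm_eq_abs,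
        abs_of_nonneg (by positivity)]
      calc (i : ℝ) * η * ‖w‖ ≤ (M : ℝ) * η * ‖w‖ := by
            apply mul_le_mul_of_nonneg_right
              (mul_le_mul_of_nonneg_right hi hη.le) (norm_nonneg w)
        _ = ρ * (‖w‖ / (‖w‖ + 1)) := by
            rw [hη_def]; field_simp
        _ < ρ * 1 := by
            apply mul_lt_mul_of_pos_left _ hρ
            rw [div_lt_one (by positivity)]
            linarith
        _ = ρ := mul_one ρ
    set Δ : ℕ → ℝ := fun i =>
      (v (h₀ + (((i : ℝ) + 1) * η) • w) - v (h₀ + ((i : ℝ) * η) • w)) / η with hΔ_def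
    have hstep : ∀ i : ℕ, i + 2 ≤ M → Δ (i + 1) ≤ Δ i - 1 / ((k : ℝ) + 1) := by
      intro i hi
      have hcenter : h₀ + (((i : ℝ) + 1) * η) • w ∈ C n k := by
        apply hball
        have h1 : (((i : ℝ) + 1) * η) • w = (((i + 1 : ℕ) : ℝ) * η) • w := by push_cast; ring_nf
        rw [h1]
        exact hmemball (i + 1) (by push_cast; exact_mod_cast by omega)
      have h1 := hcenter η (-η) hη (neg_lt_zero.mpr hη)
      have e1 : h₀ + (((i : ℝ) + 1) * η) • w + η • w = h₀ + ((((i + 1 : ℕ) : ℝ) + 1) * η) • w := by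
        rw [add_assoc, ← add_smul]; congr 1; push_cast; ring
      have e2 : h₀ + (((i : ℝ) + 1) * η) • w + (-η) • w = h₀ + ((i : ℝ) * η) • w := by
        rw [add_assoc, ← add_smul]; congr 1; ring
      rw [e1, e2] at h1
      have e3 : (v (h₀ + ((i : ℝ) * η) • w) - v (h₀ + (((i : ℝ) + 1) * η) • w)) / (-η)
          = Δ i := by
        rw [hΔ_def]; rw [div_neg, ← neg_div, neg_sub]
      have e4 : Δ (i + 1)
          = (v (h₀ + ((((i + 1 : ℕ) : ℝ) + 1) * η) • w)
              - v (h₀ + (((i : ℝ) + 1) * η) • w)) / η := by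
        rw [hΔ_def]; push_cast; ring_nf
      rw [e3] at h1
      rw [e4]
      have h2 : v (h₀ + (((i : ℝ) + 1) * η) • w) = v (h₀ + (((i + 1 : ℕ) : ℝ) * η) • w) := by
        congr 2; push_cast; ring_nf
      linarith [h1]
    have hΔbd : ∀ i : ℕ, |Δ i| ≤ α * ‖w‖ := by
      intro i
      have h1 := hlip2 (h₀ + (((i : ℝ) + 1) * η) • w) (h₀ + ((i : ℝ) * η) • w)
      have h2 : (h₀ + (((i : ℝ) + 1) * η) • w) - (h₀ + ((i : ℝ) * η) • w) = η • w := by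
        rw [add_sub_add_left_eq_sub, ← sub_smul]; congr 1; ring
      rw [h2, norm_smul, Real.norm_eq_abs, abs_of_pos hη] at h1
      rw [hΔ_def]
      rw [abs_div, abs_of_pos hη, div_le_iff₀ hη]
      calc |v (h₀ + (((i : ℝ) + 1) * η) • w) - v (h₀ + ((i : ℝ) * η) • w)|
          ≤ α * (η * ‖w‖) := h1
        _ = α * ‖w‖ * η := by ring
    have hind : ∀ j : ℕ, j + 1 ≤ M → Δ j ≤ Δ 0 - (j : ℝ) * (1 / ((k : ℝ) + 1)) := by
      intro j
      induction j with
      | zero => intro _; simp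
      | succ j ih =>
          intro hj
          have h1 := hstep j (by omega)
          have h2 := ih (by omega)
          push_cast
          push_cast at h2
          linarith
    have h1 := hind (m₀ + 1) (by omega)
    have h2 := hΔbd (m₀ + 1)
    have h3 := hΔbd 0
    have hceil : 2 * α * ‖w‖ * ((k : ℝ) + 1) ≤ (m₀ : ℝ) := Nat.le_ceil _
    have hk1 : (0 : ℝ) < (k : ℝ) + 1 := by positivity
    have h4 : ((m₀ : ℝ) + 1) * (1 / ((k : ℝ) + 1)) ≤ 2 * (α * ‖w‖) := by
      have ha := abs_le.mp h2
      have hb := abs_le.mp h3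
      push_cast at h1
      linarith
    rw [mul_one_div, div_le_iff₀ hk1] at h4
    nlinarith
  -- the union of the bad sets is meagre
  have hmeag : IsMeagre (⋃ n : ℕ, ⋃ k : ℕ, C n k) :=
    isMeagre_iUnion fun n => isMeagre_iUnion fun k =>
      isMeagre_of_closed_empty_interior (hC_closed n k) (hC_int n k)
  apply hmeag.mono
  intro h hh
  simp only [Set.mem_setOf_eq] at hh
  by_contra hnot
  apply hh
  have hnC : ∀ n k, h ∉ C n k := by
    intro n k hmem
    exact hnot (Set.mem_iUnion.2 ⟨n, Set.mem_iUnion.2 ⟨k, hmem⟩⟩)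
  -- uniqueness of the minimizer
  have huniq : ∀ x, g h x = ((v h : ℝ) : EReal) → x = xm h := by
    intro x hx
    by_contra hne
    obtain ⟨n, hn⟩ := hsep' x (xm h) hne
    have hd : 0 < |ι (e n) x - ι (e n) (xm h)| := abs_pos.mpr (sub_ne_zero.mpr hn)
    obtain ⟨k, hk⟩ := exists_nat_one_div_lt hd
    have hnot2 := hnC n k
    simp only [hC_def, Set.mem_setOf_eq] at hnot2
    push_neg at hnot2
    obtain ⟨s, s', hs, hs', hgap⟩ := hnot2
    have q1 := hQle h (e n) x s hs hx
    have q2 := hQge h (e n) x s' hs' hx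
    have q3 := hQle h (e n) (xm h) s hs (hvcoe h)
    have q4 := hQge h (e n) (xm h) s' hs' (hvcoe h)
    have habs : |ι (e n) x - ι (e n) (xm h)| ≤
        (v (h + s' • e n) - v h) / s' - (v (h + s • e n) - v h) / s := by
      rw [abs_le]
      constructor <;> linarith
    have hk' : (1 : ℝ) / ((k : ℝ) + 1) < |ι (e n) x - ι (e n) (xm h)| := by
      exact_mod_cast hk
    linarith
  refine ⟨xm h, fun x hx => ?_⟩
  have hle : g h (xm h) ≤ g h x := hxm h x
  have hne : g h (xm h) ≠ g h x := by
    intro heq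
    exact hx (huniq x (by rw [← heq, hvcoe]))
  have hlt : g h (xm h) < g h x := lt_of_le_of_ne hle hne
  simpa only [hg_def] using hlt
end

section
/- Let (K,d) be a complete metric space, Y a separable real Banach space, and ι : Y → C_b(K,ℝ) a linear map whose range separates the points of K and for which there exists a real number α ≥ 0 with ‖ι(φ)‖_∞ ≤ α‖φ‖_Y for all φ ∈ Y. Then K is compact if and only if for every sequence (xₙ) in K the following are equivalent: (i) (xₙ) converges in (K,d); (ii) there exists a continuous linear functional Q : Y → ℝ such that ι(φ)(xₙ) → Q(φ) for every φ ∈ Y. -/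
open Filter Topology

/-!
In a compact space a weak* limit `Q` of the Dirac functionals `δ_{xₙ}` pins down every cluster
point `z` of `(xₙ)` through `ι φ z = Q φ`, so by point separation there is only one, and the
sequence converges. Conversely the Dirac functionals lie in the ball of radius `‖ι‖` of `Y*`,
which is weak* sequentially compact since `Y` is separable (sequential Banach–Alaoglu); hence
every sequence in `K` has a subsequence along which they converge, and the hypothesis makes
that subsequence converge in `K`.
-/

open BoundedContinuousFunction

theorem MapClusterPt.eq_of_tendsto {X α : Type*} [TopologicalSpace X] [T2Space X] {l : Filter α}
    {u : α → X} {x y : X} (hx : MapClusterPt x l u) (hy : Tendsto u l (𝓝 y)) : x = y :=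
  eq_of_nhds_neBot <| hx.neBot.mono (inf_le_inf_left _ hy)

theorem exists_tendsto_of_separatesPoints {K Z ι α : Type*} [TopologicalSpace K] [CompactSpace K]
    [TopologicalSpace Z] [T2Space Z] {F : ι → K → Z} (hF : ∀ i, Continuous (F i))
    (hsep : ∀ x y, x ≠ y → ∃ i, F i x ≠ F i y) {l : Filter α} [l.NeBot] {u : α → K}
    {c : ι → Z} (hc : ∀ i, Tendsto (fun a => F i (u a)) l (𝓝 (c i))) :
    ∃ z, Tendsto u l (𝓝 z) := by
  have hvalue : ∀ z, MapClusterPt z l u → ∀ i, F i z = c i := fun z hz i =>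
    (hz.continuousAt_comp (hF i).continuousAt).eq_of_tendsto (hc i)
  obtain ⟨z, -, hz⟩ := isCompact_univ.exists_mapClusterPt (f := l) (u := u) (by simp)
  refine ⟨z, tendsto_nhds_of_unique_mapClusterPt fun w hw => ?_⟩
  by_contra hne
  obtain ⟨i, hi⟩ := hsep w z hne
  exact hi ((hvalue w hw i).trans (hvalue z hz i).symm)

section Dirac

variable {K Y : Type*} [TopologicalSpace K] [NormedAddCommGroup Y] [NormedSpace ℝ Y]

noncomputable def diracFunctional (ι : Y →L[ℝ] (K →ᵇ ℝ)) (x : K) : StrongDual ℝ Y :=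
  (evalCLM ℝ x).comp ι

theorem norm_diracFunctional_le (ι : Y →L[ℝ] (K →ᵇ ℝ)) (x : K) : ‖diracFunctional ι x‖ ≤ ‖ι‖ :=
  ContinuousLinearMap.opNorm_le_bound _ (norm_nonneg ι) fun φ =>
    ((ι φ).norm_coe_le_norm x).trans (ι.le_opNorm φ)

theorem exists_subseq_tendsto_diracFunctional [TopologicalSpace.SeparableSpace Y]
    (ι : Y →L[ℝ] (K →ᵇ ℝ)) (x : ℕ → K) :
    ∃ Q : StrongDual ℝ Y, ∃ g : ℕ → ℕ, StrictMono g ∧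
      ∀ φ, Tendsto (fun n => ι φ (x (g n))) atTop (𝓝 (Q φ)) := by
  obtain ⟨Q, -, g, hg, hQ⟩ := WeakDual.isSeqCompact_closedBall ℝ Y 0 ‖ι‖
    (x := fun n => StrongDual.toWeakDual (diracFunctional ι (x n)))
    fun n => by simpa using norm_diracFunctional_le ι (x n)
  exact ⟨WeakDual.toStrongDual Q, g, hg,
    tendsto_iff_forall_eval_tendsto_topDualPairing.mp hQ⟩

end Dirac

theorem stmt_2_general {K : Type*} [MetricSpace K]
    {Y : Type*} [NormedAddCommGroup Y] [NormedSpace ℝ Y]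
    [TopologicalSpace.SeparableSpace Y]
    (ι : Y →ₗ[ℝ] BoundedContinuousFunction K ℝ)
    (hsep : ∀ x y : K, x ≠ y → ∃ φ : Y, ι φ x ≠ ι φ y)
    (α : ℝ) (hbound : ∀ φ : Y, ‖ι φ‖ ≤ α * ‖φ‖) :
    CompactSpace K ↔
      ∀ x : ℕ → K,
        ((∃ l : K, Tendsto x atTop (𝓝 l)) ↔
          ∃ Q : Y →L[ℝ] ℝ, ∀ φ : Y, Tendsto (fun n => ι φ (x n)) atTop (𝓝 (Q φ))) := by
  set ιc := ι.mkContinuous α hbound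
  constructor
  · intro _ x
    constructor
    · rintro ⟨l, hl⟩
      exact ⟨diracFunctional ιc l, fun φ => ((ι φ).continuous.tendsto l).comp hl⟩
    · rintro ⟨Q, hQ⟩
      exact exists_tendsto_of_separatesPoints (fun φ => (ι φ).continuous) hsep hQ
  · intro h
    rw [compactSpace_iff_seqCompactSpace, seqCompactSpace_iff]
    intro x _
    obtain ⟨Q, g, hg, hQ⟩ := exists_subseq_tendsto_diracFunctional ιc x
    obtain ⟨l, hl⟩ := (h (x ∘ g)).2 ⟨Q, hQ⟩
    exact ⟨l, trivial, g, hg, hl⟩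

/-- Let `(K,d)` be a complete metric space, `Y` a separable real Banach space, and
`ι : Y → C_b(K,ℝ)` a linear map whose range separates the points of `K` and with
`‖ι φ‖_∞ ≤ α ‖φ‖`. Then `K` is compact iff for every sequence `(xₙ)` in `K`:
`(xₙ)` converges iff the Dirac functionals `δ_{xₙ}` converge weakly* in `Y*`. -/
theorem stmt_2 {K : Type*} [MetricSpace K] [CompleteSpace K]
    {Y : Type*} [NormedAddCommGroup Y] [NormedSpace ℝ Y] [CompleteSpace Y]
    [TopologicalSpace.SeparableSpace Y]
    (ι : Y →ₗ[ℝ] BoundedContinuousFunction K ℝ)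
    (hsep : ∀ x y : K, x ≠ y → ∃ φ : Y, ι φ x ≠ ι φ y)
    (α : ℝ) (hα : 0 ≤ α) (hbound : ∀ φ : Y, ‖ι φ‖ ≤ α * ‖φ‖) :
    CompactSpace K ↔
      ∀ x : ℕ → K,
        ((∃ l : K, Tendsto x atTop (𝓝 l)) ↔
          ∃ Q : Y →L[ℝ] ℝ, ∀ φ : Y, Tendsto (fun n => ι φ (x n)) atTop (𝓝 (Q φ))) :=
  stmt_2_general ι hsep α hbound
end

section
/- Let E be a real Banach space and let K be a subset of the dual space E* that is compact and metrizable in the weak* topology. Let f : K → ℝ ∪ {+∞} be proper and lower semicontinuous with respect to the weak* topology on K. Then the set N(f) = {x ∈ E : the function x* ↦ f(x*) − x*(x) does not attain a strict minimum on K} is meagre (of the first Baire category) in E. -/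
/-!
For `x ∈ E` the tilted function `f - x` attains its minimum on the compact set `K`. The argmin
map is monotone: if `p` minimizes `f - x` and `q` minimizes `f - y`, then
`p (y - x) ≤ q (y - x)`. As `K` is second countable, countably many `v ∈ E` separate its points,
so a point `x` without a strict minimizer lies in one of countably many sets
`G(v, c) = {x | f - x has minimizers p, q with p v + c ≤ q v}`, `c > 0`.

Each `G(v, c)` is closed: a weak* compact set is norm bounded, hence `(x, p) ↦ p x` is jointly
continuous on `E × K`, the graph of the argmin map is closed, and `G(v, c)` is its projection
along the compact factor `K × K`. It has empty interior: along a segment `x + t v`, `t`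
increasing, monotonicity turns each gap `c` into an increase of the values `p v` of
minimizers, which would make `v` unbounded on `K`.
-/

open Topology Set Bornology

theorem exists_countable_separating_of_secondCountable {X Y ι : Type*} [TopologicalSpace X]
    [SecondCountableTopology X] [TopologicalSpace Y] [T2Space Y] (φ : ι → X → Y)
    (hφ : ∀ i, Continuous (φ i)) (hsep : ∀ x y, x ≠ y → ∃ i, φ i x ≠ φ i y) :
    ∃ T : Set ι, T.Countable ∧ ∀ x y, x ≠ y → ∃ i ∈ T, φ i x ≠ φ i y := by
  obtain ⟨T, hTc, hT⟩ := TopologicalSpace.isOpen_iUnion_countable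
    (fun i => {z : X × X | φ i z.1 ≠ φ i z.2})
    (fun i => isOpen_ne_fun ((hφ i).comp continuous_fst) ((hφ i).comp continuous_snd))
  refine ⟨T, hTc, fun x y hxy => ?_⟩
  have hmem : (x, y) ∈ ⋃ i, {z : X × X | φ i z.1 ≠ φ i z.2} := mem_iUnion.2 (hsep x y hxy)
  simpa [← hT] using hmem

theorem LowerSemicontinuous.isClosed_setOf_le {X α : Type*} [TopologicalSpace X] [LinearOrder α]
    [TopologicalSpace α] [DenselyOrdered α] {g h : X → α} (hg : LowerSemicontinuous g)
    (hh : UpperSemicontinuous h) : IsClosed {x | g x ≤ h x} := by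
  refine isOpen_compl_iff.1 (isOpen_iff_mem_nhds.2 fun x hx => ?_)
  obtain ⟨y, hhy, hyg⟩ := exists_between (not_le.1 hx)
  filter_upwards [hh x y hhy, hg x y hyg] with x' h₁ h₂ using not_le.2 (h₁.trans h₂)

theorem LowerSemicontinuous.sub_coe {X : Type*} [TopologicalSpace X] {f : X → EReal}
    (hf : LowerSemicontinuous f) {c : X → ℝ} (hc : Continuous c) :
    LowerSemicontinuous fun x => f x - (c x : EReal) := by
  have hc' : LowerSemicontinuous fun x => ((-c x : ℝ) : EReal) :=
    (continuous_coe_real_ereal.comp hc.neg).lowerSemicontinuous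
  simpa [sub_eq_add_neg] using hf.add' hc' fun x =>
    EReal.continuousAt_add (.inr (EReal.coe_ne_bot _)) (.inr (EReal.coe_ne_top _))

theorem EReal.continuous_const_sub_coe (a : EReal) : Continuous fun t : ℝ => a - t := by
  refine continuous_iff_continuousAt.2 fun t => ?_
  have h := (EReal.continuousAt_add (p := (a, ((-t : ℝ) : EReal))) (.inr (EReal.coe_ne_bot _))
      (.inr (EReal.coe_ne_top _))).comp (x := -t)
      (continuous_const.prodMk continuous_coe_real_ereal).continuousAt
  simpa [Function.comp_def, sub_eq_add_neg] using h.comp continuous_neg.continuousAt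

namespace WeakDual

variable {𝕜 E : Type*} [NontriviallyNormedField 𝕜] [NormedAddCommGroup E] [NormedSpace 𝕜 E]

theorem isBounded_of_isCompact [CompleteSpace E] {s : Set (WeakDual 𝕜 E)} (hs : IsCompact s) :
    IsBounded s :=
  isBounded_iff_isVonNBounded.2 (hs.isVonNBounded (𝕜 := 𝕜))

theorem continuous_eval_of_isBounded {s : Set (WeakDual 𝕜 E)} (hs : IsBounded s) :
    Continuous fun z : E × s => (z.2 : WeakDual 𝕜 E) z.1 := by
  obtain ⟨C, hC⟩ := isBounded_iff_forall_norm_le.1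
    (isBounded_toWeakDual_preimage_iff_isBounded.2 hs)
  refine continuous_iff_continuousAt.2 fun z₀ => tendsto_iff_norm_sub_tendsto_zero.2 ?_
  have hbound : ∀ z : E × s, ‖(z.2 : WeakDual 𝕜 E) z.1 - (z₀.2 : WeakDual 𝕜 E) z₀.1‖ ≤
      C * ‖z.1 - z₀.1‖ + ‖(z.2 : WeakDual 𝕜 E) z₀.1 - (z₀.2 : WeakDual 𝕜 E) z₀.1‖ := by
    intro z
    have hsplit : (z.2 : WeakDual 𝕜 E) z.1 - (z₀.2 : WeakDual 𝕜 E) z₀.1 =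
        (z.2 : WeakDual 𝕜 E) (z.1 - z₀.1) +
          ((z.2 : WeakDual 𝕜 E) z₀.1 - (z₀.2 : WeakDual 𝕜 E) z₀.1) := by
      rw [map_sub]; ring
    rw [hsplit]
    refine (norm_add_le _ _).trans (add_le_add_left ?_ _)
    exact ((toStrongDual (z.2 : WeakDual 𝕜 E)).le_opNorm _).trans
      (mul_le_mul_of_nonneg_right (hC _ z.2.2) (norm_nonneg _))
  have hcont : Continuous fun z : E × s =>
      C * ‖z.1 - z₀.1‖ + ‖(z.2 : WeakDual 𝕜 E) z₀.1 - (z₀.2 : WeakDual 𝕜 E) z₀.1‖ :=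
    (continuous_const.mul (continuous_fst.sub continuous_const).norm).add
      ((((eval_continuous z₀.1).comp (continuous_subtype_val.comp continuous_snd)).sub
        continuous_const).norm)
  refine squeeze_zero (fun _ => norm_nonneg _) hbound ?_
  simpa using hcont.tendsto z₀

end WeakDual

section Tilt

variable {E : Type*} [NormedAddCommGroup E] [NormedSpace ℝ E] {K : Set (WeakDual ℝ E)}

noncomputable def tilt (f : K → EReal) (x : E) (p : K) : EReal := f p - ((p : WeakDual ℝ E) x : ℝ)

def minimizers (f : K → EReal) (x : E) : Set K := {p | ∀ q, tilt f x p ≤ tilt f x q}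

def minimizerGap (f : K → EReal) (v : E) (c : ℝ) : Set E :=
  {x | ∃ p ∈ minimizers f x, ∃ q ∈ minimizers f x,
    (p : WeakDual ℝ E) v + c ≤ (q : WeakDual ℝ E) v}

variable {f : K → EReal}

theorem minimizers_nonempty [CompactSpace K] [Nonempty K] (hf : LowerSemicontinuous f) (x : E) :
    (minimizers f x).Nonempty := by
  obtain ⟨p, -, hp⟩ := LowerSemicontinuousOn.exists_isMinOn univ_nonempty isCompact_univ
    ((hf.sub_coe ((WeakDual.eval_continuous x).comp continuous_subtype_val)).lowerSemicontinuousOn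
      univ)
  exact ⟨p, fun q => hp (mem_univ q)⟩

theorem ne_top_of_mem_minimizers (hproper : ∃ p, f p ≠ ⊤) {x : E} {p : K}
    (hp : p ∈ minimizers f x) : f p ≠ ⊤ := by
  obtain ⟨q, hq⟩ := hproper
  intro htop
  have h := hp q
  rw [tilt, htop, EReal.top_sub_coe, top_le_iff, tilt, sub_eq_add_neg, ← EReal.coe_neg] at h
  exact EReal.add_ne_top hq (EReal.coe_ne_top _) h

theorem apply_sub_le_of_mem_minimizers (hproper : ∃ p, f p ≠ ⊤) (hreal : ∀ p, f p ≠ ⊥)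
    {x y : E} {p q : K} (hp : p ∈ minimizers f x) (hq : q ∈ minimizers f y) :
    (p : WeakDual ℝ E) (y - x) ≤ (q : WeakDual ℝ E) (y - x) := by
  have hp' := hp q
  have hq' := hq p
  rw [tilt, tilt, ← EReal.coe_toReal (ne_top_of_mem_minimizers hproper hp) (hreal p),
    ← EReal.coe_toReal (ne_top_of_mem_minimizers hproper hq) (hreal q)] at hp' hq'
  norm_cast at hp' hq'
  rw [map_sub, map_sub]
  linarith

theorem isClosed_setOf_mem_minimizers (hK : IsBounded K) (hf : LowerSemicontinuous f) :
    IsClosed {z : E × K | z.2 ∈ minimizers f z.1} := by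
  have heval := WeakDual.continuous_eval_of_isBounded hK
  have hgraph : {z : E × K | z.2 ∈ minimizers f z.1} =
      ⋂ r, {z : E × K | tilt f z.1 z.2 ≤ tilt f z.1 r} := by
    ext
    simp [minimizers]
  rw [hgraph]
  refine isClosed_iInter fun r => LowerSemicontinuous.isClosed_setOf_le
    ((hf.comp continuous_snd).sub_coe heval) ?_
  exact ((EReal.continuous_const_sub_coe (f r)).comp
    ((map_continuous (r : WeakDual ℝ E)).comp continuous_fst)).upperSemicontinuous

theorem isClosed_minimizerGap [CompactSpace K] (hK : IsBounded K)
    (hf : LowerSemicontinuous f) (v : E) (c : ℝ) : IsClosed (minimizerGap f v c) := by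
  have hgraph := isClosed_setOf_mem_minimizers hK hf
  have hv : Continuous fun p : K => (p : WeakDual ℝ E) v :=
    (WeakDual.eval_continuous v).comp continuous_subtype_val
  have hclosed : IsClosed {z : E × (K × K) | z.2.1 ∈ minimizers f z.1 ∧
      z.2.2 ∈ minimizers f z.1 ∧ (z.2.1 : WeakDual ℝ E) v + c ≤ (z.2.2 : WeakDual ℝ E) v} :=
    (hgraph.preimage (continuous_fst.prodMk (continuous_fst.comp continuous_snd))).inter
      ((hgraph.preimage (continuous_fst.prodMk (continuous_snd.comp continuous_snd))).inter
        (isClosed_le ((hv.comp (continuous_fst.comp continuous_snd)).add continuous_const)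
          (hv.comp (continuous_snd.comp continuous_snd))))
  convert isClosedMap_fst_of_compactSpace _ hclosed using 1
  ext x
  simp [minimizerGap]

theorem exists_apply_add_mul_le_of_strictMono (hproper : ∃ p, f p ≠ ⊤) (hreal : ∀ p, f p ≠ ⊥)
    {x v : E} {c : ℝ} {t : ℕ → ℝ} (ht : StrictMono t)
    (hx : ∀ n, x + t n • v ∈ minimizerGap f v c) :
    ∃ p : ℕ → K, ∀ n, (p 0 : WeakDual ℝ E) v + n * c ≤ (p n : WeakDual ℝ E) v := by
  choose p hp q hq hpq using hx
  have hstep : ∀ n, (q n : WeakDual ℝ E) v ≤ (p (n + 1) : WeakDual ℝ E) v := by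
    intro n
    have h := apply_sub_le_of_mem_minimizers hproper hreal (hq n) (hp (n + 1))
    rw [add_sub_add_left_eq_sub, ← sub_smul, map_smul, map_smul, smul_eq_mul, smul_eq_mul] at h
    exact le_of_mul_le_mul_left h (sub_pos.2 (ht n.lt_succ_self))
  refine ⟨p, fun n => ?_⟩
  induction n with
  | zero => simp
  | succ n ih => push_cast; linarith [hpq n, hstep n]

theorem interior_minimizerGap_eq_empty [CompactSpace K] (hproper : ∃ p, f p ≠ ⊤)
    (hreal : ∀ p, f p ≠ ⊥) (v : E) {c : ℝ} (hc : 0 < c) : interior (minimizerGap f v c) = ∅ := by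
  refine eq_empty_iff_forall_notMem.2 fun x hx => ?_
  have hline : ∀ᶠ t in 𝓝 (0 : ℝ), x + t • v ∈ interior (minimizerGap f v c) :=
    (Continuous.tendsto (by fun_prop) 0).eventually (isOpen_interior.mem_nhds (by simpa using hx))
  obtain ⟨τ, hτ, hball⟩ := Metric.eventually_nhds_iff.1 hline
  obtain ⟨t, ht, htτ, -⟩ := exists_seq_strictMono_tendsto' hτ
  obtain ⟨p, hp⟩ := exists_apply_add_mul_le_of_strictMono hproper hreal ht fun n =>
    interior_subset (hball (by simpa [abs_of_pos (htτ n).1] using (htτ n).2))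
  obtain ⟨B, hB⟩ := (isCompact_range ((WeakDual.eval_continuous v).comp
    (continuous_subtype_val (p := (· ∈ K))))).bddAbove
  obtain ⟨n, hn⟩ := exists_nat_gt ((B - (p 0 : WeakDual ℝ E) v) / c)
  have hBn : (p n : WeakDual ℝ E) v ≤ B := hB (mem_range_self (p n))
  rw [div_lt_iff₀ hc] at hn
  linarith [hp n]

theorem mem_iUnion_minimizerGap {x v : E} {p q : K} (hp : p ∈ minimizers f x)
    (hq : q ∈ minimizers f x) (hv : (p : WeakDual ℝ E) v ≠ (q : WeakDual ℝ E) v) :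
    x ∈ ⋃ n : ℕ, minimizerGap f v (1 / (n + 1)) := by
  wlog hlt : (p : WeakDual ℝ E) v < (q : WeakDual ℝ E) v generalizing p q
  · exact this hq hp hv.symm (hv.lt_or_gt.resolve_left hlt)
  obtain ⟨n, hn⟩ := exists_nat_one_div_lt (sub_pos.2 hlt)
  exact mem_iUnion.2 ⟨n, p, hp, q, hq, by linarith⟩

end Tilt

/-- **Linear variational principle in a dual space.** Let `E` be a real Banach space and `K`
a weak* compact, weak* metrizable subset of `E*`. Let `f : K → ℝ ∪ {+∞}` be proper and lower
semicontinuous. Then the set of `x ∈ E` such that `x* ↦ f(x*) - x*(x)` does not attain a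
strict minimum on `K` is meagre in `E`. -/
theorem stmt_4 {E : Type*} [NormedAddCommGroup E] [NormedSpace ℝ E] [CompleteSpace E]
    (K : Set (WeakDual ℝ E)) (hcomp : IsCompact K)
    (hmetr : TopologicalSpace.MetrizableSpace K)
    (f : K → EReal) (hproper : ∃ p, f p ≠ ⊤) (hreal : ∀ p, f p ≠ ⊥)
    (hlsc : LowerSemicontinuous f) :
    IsMeagre {x : E | ¬ ∃ p₀ : K, ∀ p : K, p ≠ p₀ →
      f p₀ - ((p₀ : WeakDual ℝ E) x : ℝ) < f p - ((p : WeakDual ℝ E) x : ℝ)} := by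
  have : CompactSpace K := isCompact_iff_compactSpace.mp hcomp
  have : Nonempty K := let ⟨p, _⟩ := hproper; ⟨p⟩
  obtain ⟨T, hTc, hT⟩ := exists_countable_separating_of_secondCountable
    (fun v (p : K) => (p : WeakDual ℝ E) v)
    (fun v => (WeakDual.eval_continuous v).comp continuous_subtype_val)
    fun p q hpq => by
      by_contra! h
      exact hpq (Subtype.ext (ContinuousLinearMap.ext h))
  have hgap (v : E) (n : ℕ) : IsNowhereDense (minimizerGap f v (1 / (n + 1))) := by
    rw [(isClosed_minimizerGap (WeakDual.isBounded_of_isCompact hcomp) hlsc v _).isNowhereDense_iff]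
    exact interior_minimizerGap_eq_empty hproper hreal v Nat.one_div_pos_of_nat
  refine (isMeagre_biUnion hTc fun v _ => isMeagre_iUnion fun n => (hgap v n).isMeagre).mono ?_
  intro x hx
  obtain ⟨p, hp⟩ := minimizers_nonempty hlsc x
  obtain ⟨q, hqp, hqle⟩ : ∃ q, q ≠ p ∧ tilt f x q ≤ tilt f x p := by
    simpa [tilt] using not_exists.1 hx p
  have hq : q ∈ minimizers f x := fun r => hqle.trans (hp r)
  obtain ⟨v, hvT, hv⟩ := hT p q hqp.symm
  exact mem_biUnion hvT (mem_iUnion_minimizerGap hp hq hv)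
end

section
/- Let E be a real Banach space and f : E → ℝ a convex continuous function. Define the Fenchel conjugate f* : E* → ℝ ∪ {+∞} by f*(x*) = sup_{x∈E} (x*(x) − f(x)), and let D = {x* ∈ E* : f*(x*) < +∞} be its domain. If the weak* closure of D is a weak* compact and weak* metrizable subset of E*, then there exists a dense Gδ subset G of E such that f is Gâteaux differentiable at every point of G. -/
/-!
At each point `x` the one-sided directional derivative `v ↦ f'(x; v)` of `f` is sublinear, so by
Hahn–Banach the subdifferential `∂f(x)` consists of the continuous functionals below it, with
every value between `-f'(x; -v)` and `f'(x; v)` attained at `v`; hence `f` is Gâteaux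
differentiable at `x` once `∂f(x)` is a singleton. Subgradients have finite conjugate, so they lie
in the weak* closure `K` of `D`; being compact metrizable, `K` is second countable, and its points
are told apart by their values on a countable set `T ⊆ E`. It therefore suffices that
`f'(x; -v) = -f'(x; v)` for all `v ∈ T`. For a fixed `v` this holds on the countable intersection
of the open sets where some symmetric second difference `f(x+δv) + f(x-δv) - 2f(x)` is below
`δ/(n+1)`. Each of them is dense: along a line the right derivative of the convex restriction of
`f` is monotone, hence continuous off a countable set, and at a continuity point the second
difference is `o(δ)`. Baire's theorem concludes.
-/

open Filter Topology Set

namespace ConvexOn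

variable {g : ℝ → ℝ}

lemma second_difference_le_rightDeriv (hg : ConvexOn ℝ univ g) (t : ℝ) {δ : ℝ} (hδ : 0 < δ) :
    g (t + δ) + g (t - δ) - 2 * g t ≤
      δ * (derivWithin g (Ioi (t + δ)) (t + δ) - derivWithin g (Ioi (t - δ)) (t - δ)) := by
  have hright : slope g t (t + δ) ≤ derivWithin g (Ioi (t + δ)) (t + δ) :=
    (hg.slope_le_leftDeriv_of_mem_interior (mem_univ _) (by simp) (by linarith)).trans
      (hg.leftDeriv_le_rightDeriv_of_mem_interior (by simp))
  have hleft : derivWithin g (Ioi (t - δ)) (t - δ) ≤ slope g (t - δ) t :=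
    hg.rightDeriv_le_slope_of_mem_interior (by simp) (mem_univ _) (by linarith)
  rw [slope_def_field, add_sub_cancel_left, div_le_iff₀ hδ] at hright
  rw [slope_def_field, sub_sub_cancel, le_div_iff₀ hδ] at hleft
  linarith

lemma dense_setOf_second_difference_lt (hg : ConvexOn ℝ univ g) {c : ℝ} (hc : 0 < c) :
    Dense {t | ∃ δ > 0, g (t + δ) + g (t - δ) - 2 * g t < δ * c} := by
  set r := fun t => derivWithin g (Ioi t) t
  have hr : Monotone r := by
    simpa only [interior_univ, monotoneOn_univ] using hg.monotoneOn_rightDeriv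
  refine (hr.countable_not_continuousAt.dense_compl ℝ).mono fun t ht => ?_
  obtain ⟨ε, hε, hcont⟩ := Metric.continuousAt_iff.mp (not_not.mp ht) (c / 2) (half_pos hc)
  have hnear : ∀ s, |s| < ε → |r (t + s) - r t| < c / 2 := fun s hs =>
    hcont (by simpa [Real.dist_eq] using hs)
  have hup := hnear (ε / 2) (by rw [abs_of_pos (half_pos hε)]; linarith)
  have hdown := hnear (-(ε / 2)) (by rw [abs_neg, abs_of_pos (half_pos hε)]; linarith)
  rw [← sub_eq_add_neg] at hdown
  refine ⟨ε / 2, half_pos hε, ?_⟩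
  calc g (t + ε / 2) + g (t - ε / 2) - 2 * g t
      ≤ ε / 2 * (r (t + ε / 2) - r (t - ε / 2)) :=
        hg.second_difference_le_rightDeriv t (half_pos hε)
    _ < ε / 2 * c := by
        gcongr
        rw [abs_lt] at hup hdown
        linarith

end ConvexOn

section RightLineDeriv

variable {E : Type*} [AddCommGroup E] [Module ℝ E] {f : E → ℝ} {x v : E}

/-- The one-sided directional derivative `f'(x; v)`. For convex `f` the one-sided limit exists
(`ConvexOn.tendsto_rightLineDeriv`), so `derivWithin` never returns its junk value here. -/
noncomputable def rightLineDeriv (f : E → ℝ) (x v : E) : ℝ :=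
  derivWithin (fun t : ℝ => f (x + t • v)) (Ioi 0) 0

namespace ConvexOn

lemma comp_add_smul (hf : ConvexOn ℝ univ f) (x v : E) :
    ConvexOn ℝ univ (fun t : ℝ => f (x + t • v)) := by
  simpa [Function.comp_def, AffineMap.lineMap_apply, add_comm] using
    hf.comp_affineMap (AffineMap.lineMap x (x + v))

variable (hf : ConvexOn ℝ univ f)
include hf

lemma tendsto_rightLineDeriv (x v : E) :
    Tendsto (fun t : ℝ => (f (x + t • v) - f x) / t) (𝓝[>] 0) (𝓝 (rightLineDeriv f x v)) := by
  have h := (hf.comp_add_smul x v).hasDerivWithinAt_rightDeriv_of_mem_interior (x := 0) (by simp)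
  rw [hasDerivWithinAt_iff_tendsto_slope, sdiff_singleton_eq_self self_notMem_Ioi] at h
  exact h.congr fun t => by simp [slope_def_field, div_eq_inv_mul]

lemma rightLineDeriv_le {t : ℝ} (ht : 0 < t) :
    rightLineDeriv f x v ≤ (f (x + t • v) - f x) / t := by
  simpa [rightLineDeriv, slope_def_field] using
    (hf.comp_add_smul x v).rightDeriv_le_slope_of_mem_interior (x := 0) (by simp) (mem_univ t) ht

lemma rightLineDeriv_le_sub (x v : E) : rightLineDeriv f x v ≤ f (x + v) - f x := by
  simpa using hf.rightLineDeriv_le (x := x) (v := v) one_pos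

lemma rightLineDeriv_smul {c : ℝ} (hc : 0 < c) (x v : E) :
    rightLineDeriv f x (c • v) = c * rightLineDeriv f x v := by
  have hscale : Tendsto (c * ·) (𝓝[>] (0 : ℝ)) (𝓝[>] 0) := by
    simpa only [comap_mulLeft_nhdsGT_zero hc] using
      (tendsto_comap : Tendsto (c * ·) (comap (c * ·) (𝓝[>] (0 : ℝ))) _)
  refine tendsto_nhds_unique (hf.tendsto_rightLineDeriv x (c • v)) ?_
  refine (((hf.tendsto_rightLineDeriv x v).comp hscale).const_mul c).congr' ?_
  filter_upwards [self_mem_nhdsWithin] with t (ht : 0 < t)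
  simp only [Function.comp_apply, smul_smul, mul_comm t c]
  field_simp

lemma rightLineDeriv_zero (x : E) : rightLineDeriv f x 0 = 0 := by
  have h := hf.rightLineDeriv_smul two_pos x 0
  rw [smul_zero] at h
  linarith

lemma rightLineDeriv_add_le (x v w : E) :
    rightLineDeriv f x (v + w) ≤ rightLineDeriv f x v + rightLineDeriv f x w := by
  have hsum := ((hf.tendsto_rightLineDeriv x ((2 : ℝ) • v)).add
    (hf.tendsto_rightLineDeriv x ((2 : ℝ) • w))).const_mul (1 / 2)
  rw [hf.rightLineDeriv_smul two_pos, hf.rightLineDeriv_smul two_pos,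
    show (1 / 2 : ℝ) * (2 * rightLineDeriv f x v + 2 * rightLineDeriv f x w)
      = rightLineDeriv f x v + rightLineDeriv f x w by ring] at hsum
  refine le_of_tendsto_of_tendsto (hf.tendsto_rightLineDeriv x (v + w)) hsum ?_
  filter_upwards [self_mem_nhdsWithin] with t (ht : 0 < t)
  have hmid := hf.2 (mem_univ (x + t • (2 : ℝ) • v)) (mem_univ (x + t • (2 : ℝ) • w))
    (by norm_num : (0 : ℝ) ≤ 1 / 2) (by norm_num : (0 : ℝ) ≤ 1 / 2) (by norm_num)
  have hpt : (1 / 2 : ℝ) • (x + t • (2 : ℝ) • v) + (1 / 2 : ℝ) • (x + t • (2 : ℝ) • w)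
      = x + t • (v + w) := by
    simp only [smul_add, smul_smul]
    module
  rw [hpt, smul_eq_mul, smul_eq_mul] at hmid
  rw [← add_div, ← mul_div_assoc, div_le_div_iff_of_pos_right ht]
  linarith

lemma neg_rightLineDeriv_neg_le (x v : E) : -rightLineDeriv f x (-v) ≤ rightLineDeriv f x v := by
  have h := hf.rightLineDeriv_add_le x v (-v)
  rw [add_neg_cancel, hf.rightLineDeriv_zero] at h
  linarith

lemma mul_le_rightLineDeriv_smul {c : ℝ} (h₁ : -rightLineDeriv f x (-v) ≤ c)
    (h₂ : c ≤ rightLineDeriv f x v) (a : ℝ) : a * c ≤ rightLineDeriv f x (a • v) := by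
  rcases lt_trichotomy a 0 with ha | rfl | ha
  · rw [← neg_neg a, neg_smul, ← smul_neg, hf.rightLineDeriv_smul (neg_pos.mpr ha)]
    nlinarith
  · simp [hf.rightLineDeriv_zero]
  · rw [hf.rightLineDeriv_smul ha]
    exact mul_le_mul_of_nonneg_left h₂ ha.le

end ConvexOn

end RightLineDeriv

section Subdifferential

variable {E : Type*} [NormedAddCommGroup E] [NormedSpace ℝ E] {f : E → ℝ} {x : E}

def subdifferential (f : E → ℝ) (x : E) : Set (E →L[ℝ] ℝ) :=
  {p | ∀ y, p (y - x) ≤ f y - f x}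

def GateauxDifferentiableAt (f : E → ℝ) (x : E) : Prop :=
  ∃ p : E →L[ℝ] ℝ, ∀ v : E,
    Tendsto (fun t : ℝ => (f (x + t • v) - f x) / t) (𝓝[≠] 0) (𝓝 (p v))

lemma iSup_sub_lt_top_of_mem_subdifferential {p : E →L[ℝ] ℝ} (hp : p ∈ subdifferential f x) :
    ⨆ y : E, ((p y - f y : ℝ) : EReal) < ⊤ := by
  refine lt_of_le_of_lt (iSup_le fun y => ?_) (EReal.coe_lt_top (p x - f x))
  have := hp y
  rw [map_sub] at this
  exact EReal.coe_le_coe_iff.mpr (by linarith)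

namespace ConvexOn

variable (hf : ConvexOn ℝ univ f)
include hf

lemma mem_subdifferential_iff {p : E →L[ℝ] ℝ} :
    p ∈ subdifferential f x ↔ ∀ v, p v ≤ rightLineDeriv f x v := by
  refine ⟨fun hp v => ge_of_tendsto (hf.tendsto_rightLineDeriv x v) ?_, fun hp y => ?_⟩
  · filter_upwards [self_mem_nhdsWithin] with t (ht : 0 < t)
    have h := hp (x + t • v)
    rw [add_sub_cancel_left, map_smul, smul_eq_mul] at h
    rw [le_div_iff₀ ht]
    linarith
  · simpa using (hp (y - x)).trans (hf.rightLineDeriv_le_sub x (y - x))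

lemma continuous_of_le_rightLineDeriv (hcont : Continuous f) (g : E →ₗ[ℝ] ℝ)
    (hg : ∀ v, g v ≤ rightLineDeriv f x v) : Continuous g := by
  set s := {w : E | f (x + w) < f x + 1 ∧ f (x - w) < f x + 1}
  have hs : s ∈ 𝓝 0 := by
    have h₁ : Continuous fun w : E => f (x + w) := by fun_prop
    have h₂ : Continuous fun w : E => f (x - w) := by fun_prop
    exact ((isOpen_lt h₁ continuous_const).inter (isOpen_lt h₂ continuous_const)).mem_nhds
      (by simp)
  refine g.toAddMonoidHom.continuous_of_isBounded_nhds_zero hs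
    (Metric.isBounded_Icc (-1 : ℝ) 1 |>.subset ?_)
  rintro _ ⟨w, ⟨hw₁, hw₂⟩, rfl⟩
  have h₁ := (hg w).trans (hf.rightLineDeriv_le_sub x w)
  have h₂ := (hg (-w)).trans (hf.rightLineDeriv_le_sub x (-w))
  rw [map_neg, ← sub_eq_add_neg] at h₂
  exact ⟨by simp; linarith, by simp; linarith⟩

lemma exists_mem_subdifferential_apply_eq (hcont : Continuous f) (v : E) {c : ℝ}
    (h₁ : -rightLineDeriv f x (-v) ≤ c) (h₂ : c ≤ rightLineDeriv f x v) :
    ∃ p ∈ subdifferential f x, p v = c := by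
  have hwd : ∀ a : ℝ, a • v = 0 → a • c = 0 := by
    rintro a hav
    rcases smul_eq_zero.mp hav with rfl | rfl
    · exact zero_smul ℝ c
    · rw [neg_zero, hf.rightLineDeriv_zero] at h₁
      rw [hf.rightLineDeriv_zero] at h₂
      rw [le_antisymm h₂ (by simpa using h₁), smul_zero]
  set q := LinearPMap.mkSpanSingleton' (σ := RingHom.id ℝ) v c hwd
  have hq : ∀ z : q.domain, q z ≤ rightLineDeriv f x z := by
    rintro ⟨z, hz⟩
    obtain ⟨a, rfl⟩ := Submodule.mem_span_singleton.mp hz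
    rw [LinearPMap.mkSpanSingleton'_apply]
    exact hf.mul_le_rightLineDeriv_smul h₁ h₂ a
  obtain ⟨g, hgq, hg⟩ := exists_extension_of_le_sublinear q (rightLineDeriv f x)
    (fun a ha => hf.rightLineDeriv_smul ha x) (hf.rightLineDeriv_add_le x) hq
  refine ⟨⟨g, hf.continuous_of_le_rightLineDeriv hcont g hg⟩,
    hf.mem_subdifferential_iff.mpr hg, ?_⟩
  have hv : v ∈ q.domain := Submodule.mem_span_singleton_self v
  exact (hgq ⟨v, hv⟩).trans (LinearPMap.mkSpanSingleton'_apply_self v c hwd hv)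

lemma apply_eq_rightLineDeriv_of_mem_subdifferential {p : E →L[ℝ] ℝ}
    (hp : p ∈ subdifferential f x) {v : E}
    (hv : rightLineDeriv f x (-v) = -rightLineDeriv f x v) : p v = rightLineDeriv f x v := by
  have h₁ := hf.mem_subdifferential_iff.mp hp v
  have h₂ := hf.mem_subdifferential_iff.mp hp (-v)
  rw [map_neg, hv] at h₂
  linarith

lemma rightLineDeriv_neg_of_subsingleton (hcont : Continuous f)
    (h : (subdifferential f x).Subsingleton) (v : E) :
    rightLineDeriv f x (-v) = -rightLineDeriv f x v := by
  have hle := hf.neg_rightLineDeriv_neg_le x v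
  obtain ⟨p, hp, hpv⟩ := hf.exists_mem_subdifferential_apply_eq hcont v hle le_rfl
  obtain ⟨q, hq, hqv⟩ := hf.exists_mem_subdifferential_apply_eq hcont v le_rfl hle
  rw [← h hp hq, hpv] at hqv
  linarith

lemma tendsto_nhdsNE_of_rightLineDeriv_neg {v : E}
    (hv : rightLineDeriv f x (-v) = -rightLineDeriv f x v) :
    Tendsto (fun t : ℝ => (f (x + t • v) - f x) / t) (𝓝[≠] 0) (𝓝 (rightLineDeriv f x v)) := by
  rw [punctured_nhds_eq_nhdsWithin_sup_nhdsWithin]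
  refine tendsto_sup.mpr ⟨?_, hf.tendsto_rightLineDeriv x v⟩
  have hneg : Tendsto Neg.neg (𝓝[<] (0 : ℝ)) (𝓝[>] 0) := by
    simpa using tendsto_neg_nhdsLT (a := (0 : ℝ))
  have hleft := ((hf.tendsto_rightLineDeriv x (-v)).comp hneg).neg
  rw [hv, neg_neg] at hleft
  exact hleft.congr fun t => by simp [div_neg]

lemma gateauxDifferentiableAt_of_subsingleton (hcont : Continuous f)
    (h : (subdifferential f x).Subsingleton) : GateauxDifferentiableAt f x := by
  have hodd := hf.rightLineDeriv_neg_of_subsingleton hcont h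
  obtain ⟨p, hp, -⟩ := hf.exists_mem_subdifferential_apply_eq hcont 0 (c := 0)
    (by simp [hf.rightLineDeriv_zero]) (by simp [hf.rightLineDeriv_zero])
  refine ⟨p, fun v => ?_⟩
  rw [hf.apply_eq_rightLineDeriv_of_mem_subdifferential hp (hodd v)]
  exact hf.tendsto_nhdsNE_of_rightLineDeriv_neg (hodd v)

end ConvexOn

end Subdifferential

section SecondDifference

variable {E : Type*} [NormedAddCommGroup E] [NormedSpace ℝ E] {f : E → ℝ}

def secondDifferenceLt (f : E → ℝ) (v : E) (c : ℝ) : Set E :=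
  ⋃ δ > 0, {x | f (x + δ • v) + f (x - δ • v) - 2 * f x < δ * c}

lemma isOpen_secondDifferenceLt (hcont : Continuous f) (v : E) (c : ℝ) :
    IsOpen (secondDifferenceLt f v c) :=
  isOpen_biUnion fun _ _ => isOpen_lt (by fun_prop) (by fun_prop)

lemma ConvexOn.dense_secondDifferenceLt (hf : ConvexOn ℝ univ f) (v : E) {c : ℝ} (hc : 0 < c) :
    Dense (secondDifferenceLt f v c) := by
  intro x
  have hline := (hf.comp_add_smul x v).dense_setOf_second_difference_lt hc
  have hx := map_mem_closure (f := fun t : ℝ => x + t • v) (x := 0) (t := secondDifferenceLt f v c)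
    (by fun_prop) (hline.closure_eq ▸ mem_univ _) ?_
  · simpa using hx
  rintro t ⟨δ, hδ, hlt⟩
  refine mem_iUnion₂.mpr ⟨δ, hδ, ?_⟩
  simpa only [mem_ofPred_eq, add_smul, sub_smul, add_assoc, add_sub_assoc] using hlt

lemma ConvexOn.rightLineDeriv_add_neg_lt (hf : ConvexOn ℝ univ f) {v x : E} {c : ℝ}
    (hx : x ∈ secondDifferenceLt f v c) :
    rightLineDeriv f x v + rightLineDeriv f x (-v) < c := by
  obtain ⟨δ, hδ, hlt⟩ := mem_iUnion₂.mp hx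
  have h₁ := hf.rightLineDeriv_le (x := x) (v := v) hδ
  have h₂ := hf.rightLineDeriv_le (x := x) (v := -v) hδ
  rw [smul_neg, ← sub_eq_add_neg] at h₂
  have hsum : (f (x + δ • v) - f x) / δ + (f (x - δ • v) - f x) / δ < c := by
    rw [← add_div, div_lt_iff₀ hδ]
    linarith [hlt.out]
  linarith

lemma ConvexOn.rightLineDeriv_neg_of_forall_mem (hf : ConvexOn ℝ univ f) {v x : E}
    (hx : ∀ n : ℕ, x ∈ secondDifferenceLt f v (1 / (n + 1))) :
    rightLineDeriv f x (-v) = -rightLineDeriv f x v := by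
  refine le_antisymm (le_of_forall_pos_lt_add fun ε hε => ?_)
    (by linarith [hf.neg_rightLineDeriv_neg_le x v])
  obtain ⟨n, hn⟩ := exists_nat_one_div_lt hε
  linarith [hf.rightLineDeriv_add_neg_lt (hx n)]

end SecondDifference

lemma exists_countable_separating_of_continuous {X Y ι : Type*} [TopologicalSpace X]
    [SecondCountableTopology X] [TopologicalSpace Y] [T2Space Y] (φ : ι → X → Y)
    (hφ : ∀ i, Continuous (φ i)) (hsep : ∀ p q, (∀ i, φ i p = φ i q) → p = q) :
    ∃ T : Set ι, T.Countable ∧ ∀ p q, (∀ i ∈ T, φ i p = φ i q) → p = q := by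
  obtain ⟨T, hTc, hT⟩ := TopologicalSpace.isOpen_iUnion_countable
    (fun i => {pq : X × X | φ i pq.1 ≠ φ i pq.2})
    (fun i => isOpen_ne_fun ((hφ i).comp continuous_fst) ((hφ i).comp continuous_snd))
  refine ⟨T, hTc, fun p q hpq => ?_⟩
  by_contra hne
  obtain ⟨i, hi⟩ : ∃ i, φ i p ≠ φ i q := by
    by_contra! h
    exact hne (hsep p q h)
  have hmem : (p, q) ∈ ⋃ i ∈ T, {pq : X × X | φ i pq.1 ≠ φ i pq.2} := hT ▸ mem_iUnion.mpr ⟨i, hi⟩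
  obtain ⟨j, hj, hne'⟩ := mem_iUnion₂.mp hmem
  exact hne' (hpq j hj)

/-- Let `E` be a real Banach space and `f : E → ℝ` convex continuous. If the weak* closure of
the domain `D = {x* : f*(x*) < +∞}` of the Fenchel conjugate `f*` is weak* compact and weak*
metrizable, then `f` is Gâteaux differentiable at every point of a dense `Gδ` subset of `E`. -/
theorem stmt_6 {E : Type*} [NormedAddCommGroup E] [NormedSpace ℝ E] [CompleteSpace E]
    (f : E → ℝ) (hconv : ConvexOn ℝ Set.univ f) (hcont : Continuous f)
    (D : Set (WeakDual ℝ E))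
    (hD : D = {p : WeakDual ℝ E | (⨆ x : E, ((p x - f x : ℝ) : EReal)) < ⊤})
    (hcomp : IsCompact (closure D))
    (hmetr : TopologicalSpace.MetrizableSpace (closure D)) :
    ∃ G : Set E, Dense G ∧ IsGδ G ∧ ∀ x ∈ G, ∃ p : E →L[ℝ] ℝ, ∀ v : E,
      Tendsto (fun t : ℝ => (f (x + t • v) - f x) / t) (𝓝[≠] 0) (𝓝 (p v)) := by
  have := isCompact_iff_compactSpace.mp hcomp
  obtain ⟨T, hTc, hT⟩ := exists_countable_separating_of_continuous
    (fun (v : E) (p : closure D) => (p : WeakDual ℝ E) v)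
    (fun v => (WeakDual.eval_continuous v).comp continuous_subtype_val)
    (fun p q h => Subtype.ext (DFunLike.ext _ _ h))
  have := hTc.to_subtype
  let U : T × ℕ → Set E := fun i => secondDifferenceLt f i.1 (1 / (i.2 + 1))
  have hU : ∀ i, IsOpen (U i) := fun i => isOpen_secondDifferenceLt hcont _ _
  refine ⟨⋂ i, U i,
    dense_iInter_of_isOpen hU fun i => hconv.dense_secondDifferenceLt _ (by positivity),
    .iInter_of_isOpen hU, fun x hx => hconv.gateauxDifferentiableAt_of_subsingleton hcont ?_⟩
  have hodd : ∀ v ∈ T, rightLineDeriv f x (-v) = -rightLineDeriv f x v := fun v hv =>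
    hconv.rightLineDeriv_neg_of_forall_mem fun n => mem_iInter.mp hx (⟨v, hv⟩, n)
  have hK : ∀ p ∈ subdifferential f x, StrongDual.toWeakDual p ∈ closure D := fun p hp =>
    subset_closure (hD ▸ iSup_sub_lt_top_of_mem_subdifferential hp)
  intro p hp q hq
  refine StrongDual.toWeakDual.injective (congrArg Subtype.val
    (hT ⟨_, hK p hp⟩ ⟨_, hK q hq⟩ fun v hv => ?_))
  simp only [StrongDual.coe_toWeakDual]
  rw [hconv.apply_eq_rightLineDeriv_of_mem_subdifferential hp (hodd v hv),
    hconv.apply_eq_rightLineDeriv_of_mem_subdifferential hq (hodd v hv)]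
end

section
/- Let X be a real Hausdorff locally convex topological vector space, K a convex compact metrizable subset of X, and f : K → ℝ ∪ {+∞} a proper lower semicontinuous function. Let Aff(K) denote the Banach space of all continuous affine real-valued functions on K equipped with the sup norm. Then the set N(f) = {φ ∈ Aff(K) : f − φ does not attain a strict minimum on K} is meagre (of the first Baire category) in (Aff(K), ‖·‖_∞). -/
/-!
Truncating `f` at a high real level gives a bounded-below, real, lower semicontinuous `F`.
Fix a closed `Z ⊆ K × K` off the diagonal. The `φ` for which every near-minimizing level
`{F - φ < inf (F - φ) + δ}` contains a pair of `Z` form a closed set, and its complement is dense: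
finitely many continuous functionals separate the pairs of `Z`, i.e. map `K` into a Euclidean
space `E` by `e` with a uniform gap on `Z`, and at a point `c` near `0` where the Lipschitz function
`c ↦ inf_z (F z - φ z - ⟪c, e z⟫)` is differentiable (Rademacher), every near-minimizer `x` of the
perturbed function has `e x` close to minus the gradient, so no pair of `Z` survives.
Countably many such `Z` cover the off-diagonal of the metrizable `K × K`; outside the resulting
meagre union the near-minimizers of `F - φ` shrink to a point, which strictly minimizes `f - φ`.
-/

open Set Metric
open scoped RealInnerProductSpace NNReal

section

variable {M : Type*}

def nearMinimizers (g : M → ℝ) (δ : ℝ) : Set M := {x | g x < (⨅ z, g z) + δ}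

def NearMinimizersMeet (g : M → ℝ) (Z : Set (M × M)) : Prop :=
  ∀ δ > 0, (nearMinimizers g δ ×ˢ nearMinimizers g δ ∩ Z).Nonempty

section InnerProductSpace

variable {E : Type*} [NormedAddCommGroup E] [InnerProductSpace ℝ E]

theorem HasGradientAt.exists_forall_norm_sub_lt [CompleteSpace E] {Φ : E → ℝ} {v c₀ : E}
    (hΦ : HasGradientAt Φ v c₀) {η : ℝ} (hη : 0 < η) :
    ∃ δ > 0, ∀ (w : E) (a : ℝ), a < Φ c₀ + δ → (∀ k, Φ (c₀ + k) ≤ a + ⟪w, k⟫) →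
      ‖w - v‖ < η := by
  obtain ⟨r, hr, hrΦ⟩ := Metric.eventually_nhds_iff.1 <|
    Asymptotics.isLittleO_iff.1 (hasGradientAt_iff_isLittleO_nhds_zero.1 hΦ) (half_pos hη)
  refine ⟨r / 2 * (η / 2), by positivity, fun w a ha hw => ?_⟩
  rcases eq_or_ne w v with rfl | hwv
  · simpa using hη
  have hpos : 0 < ‖v - w‖ := norm_pos_iff.2 (sub_ne_zero.2 hwv.symm)
  set k : E := (r / 2 / ‖v - w‖) • (v - w)
  have hk : ‖k‖ = r / 2 := by
    rw [norm_smul, Real.norm_of_nonneg (by positivity), div_mul_cancel₀ _ hpos.ne']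
  have hkv : ⟪v, k⟫ - ⟪w, k⟫ = r / 2 * ‖v - w‖ := by
    rw [← inner_sub_left, real_inner_smul_right, real_inner_self_eq_norm_mul_norm]
    field_simp
  have hlin := hrΦ (y := k) (by rw [dist_zero_right, hk]; linarith)
  rw [Real.norm_eq_abs, abs_le, hk] at hlin
  have hup := hw k
  rw [norm_sub_rev]
  refine lt_of_mul_lt_mul_left (a := r / 2) ?_ (by positivity)
  linarith [hlin.1]

variable {h : M → ℝ} {e : M → E} {B : ℝ≥0}

theorem bddBelow_range_sub_inner (hh : BddBelow (range h)) (hB : ∀ x, ‖e x‖ ≤ B) (c : E) :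
    BddBelow (range fun z => h z - ⟪c, e z⟫) := by
  obtain ⟨b, hb⟩ := hh
  refine ⟨b - ‖c‖ * B, forall_mem_range.2 fun z => ?_⟩
  have := (real_inner_le_norm c (e z)).trans (mul_le_mul_of_nonneg_left (hB z) (norm_nonneg c))
  linarith [hb (mem_range_self z)]

theorem lipschitzWith_iInf_sub_inner [Nonempty M] (hh : BddBelow (range h))
    (hB : ∀ x, ‖e x‖ ≤ B) : LipschitzWith B fun c => ⨅ z, (h z - ⟪c, e z⟫) := by
  refine LipschitzWith.of_le_add_mul B fun c c' => ?_
  have : ∀ z, (⨅ z, (h z - ⟪c, e z⟫)) - B * dist c c' ≤ h z - ⟪c', e z⟫ := fun z => by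
    have hinf := ciInf_le (bddBelow_range_sub_inner hh hB c) z
    have := (real_inner_le_norm (c' - c) (e z)).trans
      (mul_le_mul_of_nonneg_left (hB z) (norm_nonneg _))
    rw [inner_sub_left, ← dist_eq_norm, dist_comm] at this
    linarith
  linarith [le_ciInf this]

theorem LipschitzWith.dense_differentiableAt [FiniteDimensional ℝ E] {f : E → ℝ} {C : ℝ≥0}
    (hf : LipschitzWith C f) :
    Dense {x | DifferentiableAt ℝ f x} :=
  let _ : MeasurableSpace E := borel E
  have _ : BorelSpace E := ⟨rfl⟩
  MeasureTheory.Measure.dense_of_ae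
    (hf.ae_differentiableAt (μ := (Module.finBasis ℝ E).addHaar))

theorem exists_norm_lt_forall_nearMinimizers_norm_sub_lt [FiniteDimensional ℝ E] [Nonempty M]
    (hh : BddBelow (range h)) (hB : ∀ x, ‖e x‖ ≤ B) {ε η : ℝ} (hε : 0 < ε) (hη : 0 < η) :
    ∃ c : E, ‖c‖ < ε ∧ ∃ δ > 0, ∀ x ∈ nearMinimizers (fun z => h z - ⟪c, e z⟫) δ,
      ∀ y ∈ nearMinimizers (fun z => h z - ⟪c, e z⟫) δ, ‖e x - e y‖ < η := by
  set Φ : E → ℝ := fun c => ⨅ z, (h z - ⟪c, e z⟫)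
  obtain ⟨c, hcdiff, hc⟩ := (lipschitzWith_iInf_sub_inner hh hB).dense_differentiableAt
    |>.exists_mem_open isOpen_ball (nonempty_ball.2 hε)
  obtain ⟨δ, hδ, hgrad⟩ := hcdiff.hasGradientAt.exists_forall_norm_sub_lt (half_pos hη)
  -- A near-minimizer `x` gives the affine majorant `k ↦ h x - ⟪c + k, e x⟫` of `Φ (c + ·)`.
  have key : ∀ x ∈ nearMinimizers (fun z => h z - ⟪c, e z⟫) δ, ‖-e x - gradient Φ c‖ < η / 2 :=
    fun x hx => hgrad (-e x) _ hx fun k => by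
      have := ciInf_le (bddBelow_range_sub_inner hh hB (c + k)) x
      simp only [inner_add_left, inner_neg_left] at this ⊢
      linarith [real_inner_comm (e x) k]
  refine ⟨c, mem_ball_zero_iff.1 hc, δ, hδ, fun x hx y hy => ?_⟩
  calc ‖e x - e y‖ = ‖(-e y - gradient Φ c) - (-e x - gradient Φ c)‖ := by congr 1; abel
    _ ≤ ‖-e y - gradient Φ c‖ + ‖-e x - gradient Φ c‖ := norm_sub_le _ _
    _ < η / 2 + η / 2 := add_lt_add (key y hy) (key x hx)
    _ = η := add_halves η

end InnerProductSpace

section CompactSpace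

variable [TopologicalSpace M] [CompactSpace M] {F : M → ℝ}

theorem BddBelow.range_sub_continuousMap (hF : BddBelow (range F)) (ψ : C(M, ℝ)) :
    BddBelow (range fun z => F z - ψ z) := by
  obtain ⟨b, hb⟩ := hF
  refine ⟨b - ‖ψ‖, forall_mem_range.2 fun z => ?_⟩
  have := (abs_le.1 (ψ.norm_coe_le_norm z)).2
  linarith [hb (mem_range_self z)]

theorem iInf_sub_le_iInf_sub_add_dist [Nonempty M] (hF : BddBelow (range F)) (ψ ψ' : C(M, ℝ)) :
    ⨅ z, (F z - ψ z) ≤ (⨅ z, (F z - ψ' z)) + dist ψ ψ' := by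
  rw [← sub_le_iff_le_add]
  refine le_ciInf fun z => ?_
  have := (abs_le.1 (ψ.dist_apply_le_dist (g := ψ') z |>.trans_eq' (Real.dist_eq _ _).symm)).1
  have := ciInf_le (hF.range_sub_continuousMap ψ) z
  linarith

theorem nearMinimizers_sub_subset [Nonempty M] (hF : BddBelow (range F)) {ψ ψ' : C(M, ℝ)}
    {δ δ' : ℝ} (h : δ + 2 * dist ψ ψ' ≤ δ') :
    nearMinimizers (F - ⇑ψ) δ ⊆ nearMinimizers (F - ⇑ψ') δ' := fun x hx => by
  have := (abs_le.1 (ψ.dist_apply_le_dist (g := ψ') x |>.trans_eq' (Real.dist_eq _ _).symm)).2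
  have := iInf_sub_le_iInf_sub_add_dist hF ψ ψ'
  simp only [nearMinimizers, mem_ofPred_eq, Pi.sub_apply] at hx ⊢
  linarith

theorem isClosed_setOf_nearMinimizersMeet [Nonempty M] (hF : BddBelow (range F))
    (Z : Set (M × M)) : IsClosed {ψ : C(M, ℝ) | NearMinimizersMeet (F - ⇑ψ) Z} := by
  refine isOpen_compl_iff.1 <| Metric.isOpen_iff.2 fun ψ₀ hψ₀ => ?_
  simp only [mem_compl_iff, mem_ofPred_eq, NearMinimizersMeet, not_forall,
    not_nonempty_iff_eq_empty] at hψ₀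
  obtain ⟨δ, hδ, hempty⟩ := hψ₀
  refine ⟨δ / 4, by positivity, fun ψ hψ hmeet => ?_⟩
  have hsub := nearMinimizers_sub_subset hF (ψ := ψ) (ψ' := ψ₀) (δ := δ / 2) (δ' := δ)
    (by rw [mem_ball] at hψ; linarith)
  obtain ⟨p, hp, hpZ⟩ := hmeet (δ / 2) (by positivity)
  exact (hempty ▸ ⟨prod_mono hsub hsub hp, hpZ⟩ : p ∈ (∅ : Set (M × M)))

theorem exists_forall_ne_lt_of_not_nearMinimizersMeet [Nonempty M] {g : M → ℝ}
    (hg : LowerSemicontinuous g) {Z : ℕ → Set (M × M)} (hZ : (diagonal M)ᶜ ⊆ ⋃ n, Z n)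
    (hwell : ∀ n, ¬ NearMinimizersMeet g (Z n)) : ∃ x₀, ∀ x, x ≠ x₀ → g x₀ < g x := by
  obtain ⟨x₀, -, hmin⟩ :=
    (hg.lowerSemicontinuousOn univ).exists_isMinOn univ_nonempty isCompact_univ
  have hinf : ⨅ z, g z = g x₀ :=
    le_antisymm (ciInf_le ⟨g x₀, forall_mem_range.2 fun z => hmin (mem_univ z)⟩ x₀)
      (le_ciInf fun z => hmin (mem_univ z))
  refine ⟨x₀, fun x hx => not_le.1 fun hle => ?_⟩
  obtain ⟨n, hn⟩ := mem_iUnion.1 (hZ (show (x, x₀) ∉ diagonal M from hx))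
  refine hwell n fun δ hδ => ⟨(x, x₀), ⟨?_, ?_⟩, hn⟩ <;>
    simp only [nearMinimizers, mem_ofPred_eq, hinf] <;> linarith

end CompactSpace

section SeparatingDual

variable {X : Type*} [AddCommGroup X] [Module ℝ X] [TopologicalSpace X] [SeparatingDual ℝ X]
  [TopologicalSpace M] {u : M → X}

theorem exists_clm_euclideanSpace_ne (hu : Continuous u) {Z : Set (M × M)} (hZ : IsCompact Z)
    (hZu : ∀ p ∈ Z, u p.1 ≠ u p.2) :
    ∃ (s : Finset (X →L[ℝ] ℝ)) (L : X →L[ℝ] EuclideanSpace ℝ s),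
      ∀ p ∈ Z, L (u p.1) ≠ L (u p.2) := by
  obtain ⟨s, hs⟩ := hZ.elim_finite_subcover (fun ℓ : X →L[ℝ] ℝ => {p | ℓ (u p.1) ≠ ℓ (u p.2)})
    (fun ℓ => isOpen_ne_fun (by fun_prop) (by fun_prop))
    (fun p hp => mem_iUnion.2 (SeparatingDual.exists_separating_of_ne (hZu p hp)))
  refine ⟨s, (EuclideanSpace.equiv s ℝ).symm.toContinuousLinearMap ∘L
    ContinuousLinearMap.pi fun ℓ : s => ℓ.1, fun p hp hL => ?_⟩
  obtain ⟨ℓ, hℓ, hne⟩ := mem_iUnion₂.1 (hs hp)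
  exact hne (by simpa using congrFun (congrArg (EuclideanSpace.equiv s ℝ) hL) ⟨ℓ, hℓ⟩)

theorem exists_clm_not_nearMinimizersMeet [CompactSpace M] [Nonempty M] (hu : Continuous u)
    {g : M → ℝ} (hg : BddBelow (range g)) {Z : Set (M × M)} (hZ : IsClosed Z)
    (hZu : ∀ p ∈ Z, u p.1 ≠ u p.2) {η : ℝ} (hη : 0 < η) :
    ∃ ℓ : X →L[ℝ] ℝ, (∀ x, |ℓ (u x)| < η) ∧ ¬ NearMinimizersMeet (g - ⇑ℓ ∘ u) Z := by
  obtain ⟨s, L, hL⟩ := exists_clm_euclideanSpace_ne hu hZ.isCompact hZu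
  set e : M → EuclideanSpace ℝ s := fun x => L (u x)
  obtain ⟨ρ, hρ, hρZ⟩ := hZ.isCompact.exists_forall_le' (a := 0)
    (f := fun p => ‖e p.1 - e p.2‖) (by fun_prop)
    fun p hp => norm_pos_iff.2 (sub_ne_zero.2 (hL p hp))
  obtain ⟨B, hB⟩ : ∃ B : ℝ≥0, ∀ x, ‖e x‖ ≤ B := by
    obtain ⟨C, hC⟩ := (isCompact_range (by fun_prop : Continuous e)).isBounded.exists_norm_le
    exact ⟨C.toNNReal, fun x => (hC _ (mem_range_self x)).trans (Real.le_coe_toNNReal C)⟩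
  obtain ⟨c, hc, δ, hδ, hcδ⟩ := exists_norm_lt_forall_nearMinimizers_norm_sub_lt hg hB
    (ε := η / (B + 1)) (by positivity) hρ
  have hge : g - ⇑(innerSL ℝ c ∘L L) ∘ u = fun z => g z - ⟪c, e z⟫ := by
    ext z; simp [e]
  refine ⟨innerSL ℝ c ∘L L, fun x => ?_, fun hmeet => ?_⟩
  · have hcB : ‖c‖ * B < η := by
      rw [lt_div_iff₀ (by positivity)] at hc
      nlinarith [norm_nonneg c]
    calc |innerSL ℝ c (L (u x))| = |⟪c, e x⟫| := by simp [e]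
      _ ≤ ‖c‖ * ‖e x‖ := abs_real_inner_le_norm c (e x)
      _ ≤ ‖c‖ * B := mul_le_mul_of_nonneg_left (hB x) (norm_nonneg c)
      _ < η := hcB
  · rw [hge] at hmeet
    obtain ⟨p, ⟨hp₁, hp₂⟩, hpZ⟩ := hmeet δ hδ
    exact (hρZ p hpZ).not_gt (hcδ _ hp₁ _ hp₂)

end SeparatingDual

section Truncation

variable {f : M → EReal} {C : ℝ}

noncomputable def truncate (f : M → EReal) (C : ℝ) (x : M) : ℝ := (min (f x) C).toReal

theorem coe_truncate {x : M} (hx : f x ≠ ⊥) : (truncate f C x : EReal) = min (f x) C :=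
  EReal.coe_toReal (min_le_right _ _ |>.trans_lt (EReal.coe_lt_top C)).ne
    (by rcases min_choice (f x) C with h | h <;> rw [h]; exacts [hx, EReal.coe_ne_bot C])

theorem forall_ne_sub_lt_of_truncate (hbot : ∀ x, f x ≠ ⊥) {q : M} (hq : f q ≠ ⊤) {φ : M → ℝ}
    {r : ℝ} (hφ : ∀ x, |φ x| ≤ r) (hC : (f q).toReal + 2 * r < C) {x₀ : M}
    (hx₀ : ∀ x, x ≠ x₀ → truncate f C x₀ - φ x₀ < truncate f C x - φ x) :
    ∀ x, x ≠ x₀ → f x₀ - φ x₀ < f x - φ x := by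
  have hq₀ : truncate f C x₀ - φ x₀ ≤ truncate f C q - φ q := by
    rcases eq_or_ne q x₀ with rfl | h
    exacts [le_rfl, (hx₀ q h).le]
  have hqC : truncate f C q ≤ (f q).toReal := by
    rw [← EReal.coe_le_coe_iff, coe_truncate (hbot q), EReal.coe_toReal hq (hbot q)]
    exact min_le_left _ _
  have hx₀C : (truncate f C x₀ : EReal) = f x₀ := by
    have hlt : truncate f C x₀ < C := by
      linarith [(abs_le.1 (hφ q)).1, (abs_le.1 (hφ x₀)).2]
    rw [← EReal.coe_lt_coe_iff, coe_truncate (hbot x₀), min_lt_iff, lt_self_iff_false,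
      or_false] at hlt
    rw [coe_truncate (hbot x₀), min_eq_left hlt.le]
  intro x hx
  calc f x₀ - φ x₀ = ((truncate f C x₀ - φ x₀ : ℝ) : EReal) := by rw [EReal.coe_sub, hx₀C]
    _ < ((truncate f C x - φ x : ℝ) : EReal) := EReal.coe_lt_coe_iff.2 (hx₀ x hx)
    _ ≤ f x - φ x := by
      rw [EReal.coe_sub, coe_truncate (hbot x)]
      exact EReal.sub_le_sub (min_le_left _ _) le_rfl

variable [TopologicalSpace M]

theorem lowerSemicontinuous_truncate (hf : LowerSemicontinuous f) (hbot : ∀ x, f x ≠ ⊥) :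
    LowerSemicontinuous (truncate f C) := fun x t ht => by
  have hmin := hf.inf (lowerSemicontinuous_const (z := (C : EReal)))
  filter_upwards [hmin x t (show (t : EReal) < min (f x) C by
    rwa [← coe_truncate (hbot x), EReal.coe_lt_coe_iff])] with y hy
  show t < truncate f C y
  rwa [← EReal.coe_lt_coe_iff, coe_truncate (hbot y)]

theorem bddBelow_range_truncate [CompactSpace M] (hf : LowerSemicontinuous f)
    (hbot : ∀ x, f x ≠ ⊥) : BddBelow (range (truncate f C)) := by
  simpa using ((lowerSemicontinuous_truncate hf hbot).lowerSemicontinuousOn univ)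
    |>.bddBelow_of_isCompact isCompact_univ

end Truncation

section Aff

variable {X : Type*} [AddCommGroup X] [Module ℝ X] [TopologicalSpace X]

abbrev Aff (K : Set X) : Type _ :=
  {ψ : C(K, ℝ) // ∀ (a b : X) (ha : a ∈ K) (hb : b ∈ K) (l : ℝ),
    0 ≤ l → l ≤ 1 → ∀ hm : l • a + (1 - l) • b ∈ K,
      ψ ⟨l • a + (1 - l) • b, hm⟩ = l * ψ ⟨a, ha⟩ + (1 - l) * ψ ⟨b, hb⟩}

variable [SeparatingDual ℝ X] {K : Set X} [CompactSpace K] [Nonempty K] {F : K → ℝ}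
  {Z : Set (K × K)}

theorem dense_setOf_not_nearMinimizersMeet (hF : BddBelow (range F)) (hZ : IsClosed Z)
    (hZd : Disjoint Z (diagonal K)) : Dense {φ : Aff K | ¬ NearMinimizersMeet (F - ⇑φ.1) Z} := by
  refine Metric.dense_iff.2 fun φ η hη => ?_
  obtain ⟨ℓ, hℓη, hℓ⟩ := exists_clm_not_nearMinimizersMeet continuous_subtype_val
    (hF.range_sub_continuousMap φ.1) hZ
    (fun p hp h => hZd.notMem_of_mem_left hp (Subtype.ext h)) hη
  set ℓK : C(K, ℝ) := ContinuousMap.restrict K ⟨ℓ, ℓ.continuous⟩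
  refine ⟨⟨φ.1 + ℓK, fun a b ha hb l h₀ h₁ hm => ?_⟩, ?_, ?_⟩
  · simp [ℓK, φ.2 a b ha hb l h₀ h₁ hm]
    ring
  · rw [mem_ball, Subtype.dist_eq, dist_eq_norm, add_sub_cancel_left,
      ContinuousMap.norm_lt_iff _ hη]
    exact hℓη
  · convert hℓ using 2
    ext z
    simp [ℓK, sub_sub]

theorem isMeagre_setOf_nearMinimizersMeet (hF : BddBelow (range F)) (hZ : IsClosed Z)
    (hZd : Disjoint Z (diagonal K)) : IsMeagre {φ : Aff K | NearMinimizersMeet (F - ⇑φ.1) Z} :=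
  (isClosed_isNowhereDense_iff_compl.2
    ⟨((isClosed_setOf_nearMinimizersMeet hF Z).preimage continuous_subtype_val).isOpen_compl,
      dense_setOf_not_nearMinimizersMeet hF hZ hZd⟩).2.isMeagre

end Aff

end

theorem stmt_7_general {X : Type*} [AddCommGroup X] [Module ℝ X] [TopologicalSpace X]
    [IsTopologicalAddGroup X] [ContinuousSMul ℝ X] [LocallyConvexSpace ℝ X] [T2Space X]
    (K : Set X) (hKcomp : IsCompact K)
    (hmetr : TopologicalSpace.MetrizableSpace K)
    (f : K → EReal) (hproper : ∃ p, f p ≠ ⊤) (hreal : ∀ p, f p ≠ ⊥)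
    (hlsc : LowerSemicontinuous f) :
    IsMeagre {φ : {ψ : C(K, ℝ) // ∀ (a b : X) (ha : a ∈ K) (hb : b ∈ K) (l : ℝ),
        0 ≤ l → l ≤ 1 → ∀ hm : l • a + (1 - l) • b ∈ K,
          ψ ⟨l • a + (1 - l) • b, hm⟩ = l * ψ ⟨a, ha⟩ + (1 - l) * ψ ⟨b, hb⟩} |
      ¬ ∃ p₀ : K, ∀ p : K, p ≠ p₀ →
        f p₀ - (φ.1 p₀ : ℝ) < f p - (φ.1 p : ℝ)} := by
  have : CompactSpace K := isCompact_iff_compactSpace.mp hKcomp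
  obtain ⟨q, hq⟩ := hproper
  have : Nonempty K := ⟨q⟩
  obtain ⟨U, hUopen, hdiag⟩ := (isClosed_diagonal (X := K)).isGδ.eq_iInter_nat
  have hU : ⋃ n, (U n)ᶜ = (diagonal K)ᶜ := by rw [hdiag, compl_iInter]
  set C : ℕ → ℝ := fun r => (f q).toReal + 2 * r + 1
  refine IsMeagre.mono ?_ <| isMeagre_iUnion fun n => isMeagre_iUnion fun r =>
    isMeagre_setOf_nearMinimizersMeet (bddBelow_range_truncate (C := C r) hlsc hreal)
      (hUopen n).isClosed_compl
      (subset_compl_iff_disjoint_right.1 (hU ▸ subset_iUnion (fun n => (U n)ᶜ) n))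
  intro φ hφ
  by_contra hcover
  simp only [mem_iUnion, mem_ofPred_eq, not_exists] at hcover
  have hlsc' : LowerSemicontinuous (truncate f (C ⌈‖φ.1‖⌉₊) - ⇑φ.1) :=
    (lowerSemicontinuous_truncate hlsc hreal).add φ.1.continuous.neg.lowerSemicontinuous
  obtain ⟨x₀, hx₀⟩ := exists_forall_ne_lt_of_not_nearMinimizersMeet hlsc' hU.ge
    fun n => hcover n ⌈‖φ.1‖⌉₊
  exact hφ ⟨x₀, forall_ne_sub_lt_of_truncate hreal hq
    (fun x => (φ.1.norm_coe_le_norm x).trans (Nat.le_ceil _)) (by simp [C]) hx₀⟩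

/-- **Variational principle with continuous affine perturbations.** Let `X` be a real
Hausdorff locally convex space, `K ⊆ X` a convex compact metrizable subset, and
`f : K → ℝ ∪ {+∞}` proper and lower semicontinuous. Then the set of continuous affine
functions `φ : K → ℝ` such that `f - φ` does not attain a strict minimum on `K` is meagre
in `Aff(K)` (with the topology of uniform convergence, i.e. the compact-open topology,
which coincides with the sup-norm topology since `K` is compact). -/
theorem stmt_7 {X : Type*} [AddCommGroup X] [Module ℝ X] [TopologicalSpace X]
    [IsTopologicalAddGroup X] [ContinuousSMul ℝ X] [LocallyConvexSpace ℝ X] [T2Space X]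
    (K : Set X) (hKconv : Convex ℝ K) (hKcomp : IsCompact K)
    (hmetr : TopologicalSpace.MetrizableSpace K)
    (f : K → EReal) (hproper : ∃ p, f p ≠ ⊤) (hreal : ∀ p, f p ≠ ⊥)
    (hlsc : LowerSemicontinuous f) :
    IsMeagre {φ : {ψ : C(K, ℝ) // ∀ (a b : X) (ha : a ∈ K) (hb : b ∈ K) (l : ℝ),
        0 ≤ l → l ≤ 1 → ∀ hm : l • a + (1 - l) • b ∈ K,
          ψ ⟨l • a + (1 - l) • b, hm⟩ = l * ψ ⟨a, ha⟩ + (1 - l) * ψ ⟨b, hb⟩} |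
      ¬ ∃ p₀ : K, ∀ p : K, p ≠ p₀ →
        f p₀ - (φ.1 p₀ : ℝ) < f p - (φ.1 p : ℝ)} :=
  stmt_7_general K hKcomp hmetr f hproper hreal hlsc
end

section
/- Let S be a Hausdorff topological space and let Φ be a real Banach space whose elements are (identified via an injective linear map with) real-valued functions on S. Let K be a nonempty compact metrizable Φ-convex subset of S and suppose: (1) the restriction of each φ ∈ Φ to K is continuous, and there exists α_K ≥ 0 such that sup_{x∈K}|φ(x)| ≤ α_K ‖φ‖_Φ for all φ ∈ Φ; (2) Φ separates the points of K. Then: (i) the set of φ ∈ Φ that attain a strict maximum on K at some point contains a dense Gδ subset of (Φ,‖·‖_Φ); in particular the set ΦExp(K) of Φ-exposed points of K is nonempty; and (ii) K = conv_Φ(ΦExp(K)), the Φ-convex hull of ΦExp(K). -/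
/-!
Transport everything to `C(K, ℝ)`, with `K` carrying a compatible metric. For `r > 0`, the
functions whose `δ`-near-maximizers, for some `δ > 0`, fit in a ball of radius `r` form an open
set. Its preimage in `Φ` is dense: given `φ`, finitely many `gᵢ ∈ Φ` separate the points of `K`
at distance `≥ r` (compactness), `e = (gᵢ)` maps `K` into a Euclidean space, and among the
maximizers of `φ` one picks `m` with `‖e m‖` maximal. Then `θ = ∑ gᵢ(m) gᵢ = ⟪e m, e ·⟫` is
maximal on the maximizers of `φ` only where `e = e m`, so `φ + tθ` has its near-maximizers
close to `m` for small `t > 0`. Baire's theorem over `r = 1/(n+1)` yields the dense `Gδ` of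
functionals with a strict maximum. Finally, a half-space `{ι φ ≤ c}` containing the exposed
points contains `K`, because functionals arbitrarily close to `φ` attain their maximum at an
exposed point.
-/

/-- A subset `X` of `S` is `Φ`-convex (w.r.t. an evaluation `ev : Φ → S → ℝ`) if `X = S` or
`X` is the intersection of a nonempty family of sets `{x : ev φ x ≤ λ}`, `φ ∈ Φ`, `λ ∈ ℝ`. -/
def IsPhiConvex {S Φ : Type*} (ev : Φ → S → ℝ) (X : Set S) : Prop :=
  X = Set.univ ∨ ∃ T : Set (Φ × ℝ), T.Nonempty ∧
    X = ⋂ p ∈ T, {x : S | ev p.1 x ≤ p.2}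

/-- The `Φ`-convex hull of a set `A`: the intersection of all `Φ`-convex sets containing `A`. -/
def phiConvexHull {S Φ : Type*} (ev : Φ → S → ℝ) (A : Set S) : Set S :=
  ⋂₀ {X : Set S | IsPhiConvex ev X ∧ A ⊆ X}

/-- The set of `Φ`-exposed points of `C`: points of `C` at which some `φ ∈ Φ` attains a
strict maximum over `C`. -/
def phiExposedPoints {S Φ : Type*} (ev : Φ → S → ℝ) (C : Set S) : Set S :=
  {x ∈ C | ∃ φ : Φ, ∀ y ∈ C, y ≠ x → ev φ y < ev φ x}

open Filter Topology Metric TopologicalSpace Set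

section PhiConvex

variable {S Φ : Type*} {ev : Φ → S → ℝ}

lemma subset_phiConvexHull_of_forall_le {A K : Set S}
    (h : ∀ φ c, (∀ a ∈ A, ev φ a ≤ c) → ∀ z ∈ K, ev φ z ≤ c) :
    K ⊆ phiConvexHull ev A := by
  rintro z hz X ⟨hX | ⟨T, -, rfl⟩, hAX⟩
  · exact hX ▸ mem_univ z
  · exact mem_iInter₂.mpr fun p hp =>
      h p.1 p.2 (fun a ha => mem_iInter₂.mp (hAX ha) p hp) z hz

lemma phiConvexHull_subset {A X : Set S} (hX : IsPhiConvex ev X) (hAX : A ⊆ X) :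
    phiConvexHull ev A ⊆ X :=
  sInter_subset_of_mem ⟨hX, hAX⟩

end PhiConvex

lemma real_inner_lt_inner_self_of_norm_le {E : Type*} [NormedAddCommGroup E]
    [InnerProductSpace ℝ E] {v w : E} (hwv : ‖w‖ ≤ ‖v‖) (hne : w ≠ v) :
    inner ℝ v w < inner ℝ v v := by
  have hpos : 0 < ‖v - w‖ ^ 2 := by
    have := norm_pos_iff.mpr (sub_ne_zero.mpr hne.symm)
    positivity
  have hsq : ‖w‖ ^ 2 ≤ ‖v‖ ^ 2 := pow_le_pow_left₀ (norm_nonneg w) hwv 2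
  rw [norm_sub_sq_real] at hpos
  rw [real_inner_self_eq_norm_sq]
  linarith

def nearMaximizers {X : Type*} (h : X → ℝ) (δ : ℝ) : Set X :=
  {x | ∀ y, h y ≤ h x + δ}

lemma nearMaximizers_subset_of_dist_le {X : Type*} {h k : X → ℝ} {η : ℝ}
    (hk : ∀ x, dist (k x) (h x) ≤ η) (δ : ℝ) :
    nearMaximizers k δ ⊆ nearMaximizers h (δ + 2 * η) := by
  intro x hx y
  have hx' := abs_le.mp (hk x)
  have hy' := abs_le.mp (hk y)
  have := hx y
  linarith [hx'.1, hy'.2]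

lemma IsOpen.exists_pos_setOf_lt_subset {X : Type*} [TopologicalSpace X] [CompactSpace X]
    {F : X → ℝ} (hF : Continuous F) {V : Set X} (hV : IsOpen V) (hFV : {x | F x ≤ 0} ⊆ V) :
    ∃ η > 0, {x | F x < η} ⊆ V := by
  obtain ⟨η, hη, hηF⟩ := hV.isClosed_compl.isCompact.exists_forall_le' hF.continuousOn
    (a := 0) fun x hx => not_le.mp fun h => hx (hFV h)
  exact ⟨η, hη, fun x hx => by_contra fun hxV => (hηF x hxV).not_gt hx⟩

section MaxConcentrated

variable {X : Type*} [MetricSpace X] [CompactSpace X]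

variable (X) in
def maxConcentrated (r : ℝ) : Set C(X, ℝ) :=
  {h | ∃ δ > 0, ∃ c, nearMaximizers h δ ⊆ ball c r}

lemma isOpen_maxConcentrated (r : ℝ) : IsOpen (maxConcentrated X r) := by
  refine Metric.isOpen_iff.mpr fun h ⟨δ, hδ, c, hc⟩ => ⟨δ / 4, by positivity, fun k hk => ?_⟩
  refine ⟨δ / 2, by positivity, c, Subset.trans ?_ hc⟩
  convert nearMaximizers_subset_of_dist_le
    (fun x => (ContinuousMap.dist_apply_le_dist x).trans (mem_ball.mp hk).le) (δ / 2) using 2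
  ring

lemma exists_forall_lt_of_forall_mem_maxConcentrated [Nonempty X] {h : C(X, ℝ)}
    (hh : ∀ n : ℕ, h ∈ maxConcentrated X (1 / (n + 1))) : ∃ x, ∀ y, y ≠ x → h y < h x := by
  obtain ⟨x, hx⟩ := h.continuous.exists_forall_ge (by simp)
  refine ⟨x, fun y hyx => (hx y).lt_of_ne fun hxy => ?_⟩
  obtain ⟨n, hn⟩ := exists_nat_one_div_lt (half_pos (dist_pos.mpr hyx))
  obtain ⟨δ, hδ, c, hc⟩ := hh n
  have hxc := mem_ball.mp (hc (show x ∈ nearMaximizers h δ from fun z => by linarith [hx z]))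
  have hyc := mem_ball.mp (hc (show y ∈ nearMaximizers h δ from fun z => by linarith [hx z]))
  linarith [dist_triangle_right y x c]

lemma exists_finset_separating {L : Set C(X, ℝ)} (hL : ∀ x y, x ≠ y → ∃ g ∈ L, g x ≠ g y)
    {r : ℝ} (hr : 0 < r) :
    ∃ s : Finset C(X, ℝ), ↑s ⊆ L ∧ ∀ x y, r ≤ dist x y → ∃ g ∈ s, g x ≠ g y := by
  have hP : IsCompact {p : X × X | r ≤ dist p.1 p.2} :=
    (isClosed_le continuous_const continuous_dist).isCompact
  obtain ⟨s, hsL, hs, hcover⟩ := hP.elim_finite_subcover_image (b := L)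
    (c := fun g => {p : X × X | g p.1 ≠ g p.2})
    (fun g _ => isOpen_ne_fun (g.continuous.comp continuous_fst) (g.continuous.comp continuous_snd))
    fun p hp => by
      obtain ⟨g, hg, hne⟩ := hL p.1 p.2 (dist_pos.mp (hr.trans_le hp))
      exact mem_biUnion hg hne
  refine ⟨hs.toFinset, by simpa using hsL, fun x y hxy => ?_⟩
  simpa using hcover (show (x, y) ∈ {p : X × X | r ≤ dist p.1 p.2} from hxy)

end MaxConcentrated

section Perturbation

variable {X : Type*} [MetricSpace X] [CompactSpace X] [Nonempty X]

lemma exists_direction_exposing_maximizer {L : Submodule ℝ C(X, ℝ)}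
    (hL : ∀ x y, x ≠ y → ∃ g ∈ L, g x ≠ g y) (h : C(X, ℝ)) {r : ℝ} (hr : 0 < r) :
    ∃ m, (∀ y, h y ≤ h m) ∧ ∃ θ ∈ L, ∀ x, h m ≤ h x → θ m ≤ θ x → dist x m < r := by
  obtain ⟨s, hsL, hs⟩ := exists_finset_separating (L := (L : Set C(X, ℝ))) hL hr
  let e : X → EuclideanSpace ℝ s := fun x => WithLp.toLp 2 fun g => (g : C(X, ℝ)) x
  have he : Continuous e :=
    (PiLp.continuous_toLp 2 _).comp (continuous_pi fun g => g.1.continuous)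
  let M := {x | ∀ y, h y ≤ h x}
  have hMc : IsCompact M := IsClosed.isCompact <| by
    simpa only [M, ofPred_forall] using
      isClosed_iInter fun y => isClosed_le continuous_const h.continuous
  obtain ⟨m₀, hm₀⟩ := h.continuous.exists_forall_ge (by simp)
  obtain ⟨m, hmM, hm⟩ := hMc.exists_isMaxOn ⟨m₀, hm₀⟩ (continuous_norm.comp he).continuousOn
  refine ⟨m, hmM, ∑ g ∈ s, g m • g, Submodule.sum_mem _ fun g hg => L.smul_mem _ (hsL hg),
    fun x hx hθ => ?_⟩
  have hinner : ∀ x, (∑ g ∈ s, g m • g) x = inner ℝ (e m) (e x) := by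
    intro x
    simp only [ContinuousMap.sum_apply, ContinuousMap.smul_apply, smul_eq_mul, e,
      PiLp.inner_apply, RCLike.inner_apply, conj_trivial]
    rw [← Finset.sum_coe_sort s]
    exact Finset.sum_congr rfl fun g _ => mul_comm _ _
  have hex : e x = e m := by
    by_contra hne
    have := real_inner_lt_inner_self_of_norm_le (hm fun y => (hmM y).trans hx) hne
    rw [← hinner, ← hinner] at this
    linarith
  by_contra hfar
  obtain ⟨g, hg, hgne⟩ := hs x m (not_lt.mp hfar)
  exact hgne (congrArg (fun v => v.ofLp ⟨g, hg⟩) hex)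

lemma exists_eventually_add_smul_mem_maxConcentrated {L : Submodule ℝ C(X, ℝ)}
    (hL : ∀ x y, x ≠ y → ∃ g ∈ L, g x ≠ g y) (h : C(X, ℝ)) {r : ℝ} (hr : 0 < r) :
    ∃ θ ∈ L, ∀ᶠ t : ℝ in 𝓝[>] 0, h + t • θ ∈ maxConcentrated X r := by
  obtain ⟨m, hm, θ, hθL, hθ⟩ := exists_direction_exposing_maximizer hL h hr
  obtain ⟨η, hη, hηV⟩ := isOpen_ball.exists_pos_setOf_lt_subset
    (F := fun x => max (h m - h x) (θ m - θ x)) (by fun_prop) fun x hx => by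
      simp only [mem_ofPred_eq, max_le_iff, sub_nonpos] at hx
      exact mem_ball.mpr (hθ x hx.1 hx.2)
  have hsmall : ∀ᶠ t in 𝓝[>] (0 : ℝ), t * (η + 4 * ‖θ‖) < η :=
    ((continuous_id.mul continuous_const).tendsto' 0 0 (zero_mul _)).mono_left
      nhdsWithin_le_nhds |>.eventually (gt_mem_nhds hη)
  refine ⟨θ, hθL, ?_⟩
  filter_upwards [hsmall, self_mem_nhdsWithin] with t htη (ht : 0 < t)
  refine ⟨t * η / 2, by positivity, m, fun x hx => hηV ?_⟩
  have hmx := hx m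
  simp only [ContinuousMap.add_apply, ContinuousMap.smul_apply, smul_eq_mul] at hmx
  have hθx := abs_le.mp ((Real.norm_eq_abs _).symm.trans_le (θ.norm_coe_le_norm x))
  have hθm := abs_le.mp ((Real.norm_eq_abs _).symm.trans_le (θ.norm_coe_le_norm m))
  have hθ_gap : θ m - θ x ≤ η / 2 :=
    le_of_mul_le_mul_left (by nlinarith [hm x]) ht
  show max (h m - h x) (θ m - θ x) < η
  refine max_lt ?_ (by linarith)
  nlinarith

end Perturbation

section Residual

variable {Φ : Type*} [AddCommGroup Φ] [Module ℝ Φ] [TopologicalSpace Φ] [ContinuousAdd Φ]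
  [ContinuousSMul ℝ Φ]

lemma dense_preimage_maxConcentrated {X : Type*} [MetricSpace X] [CompactSpace X] [Nonempty X]
    (T : Φ →L[ℝ] C(X, ℝ)) (hT : ∀ x y, x ≠ y → ∃ φ, T φ x ≠ T φ y) {r : ℝ} (hr : 0 < r) :
    Dense (T ⁻¹' maxConcentrated X r) := by
  intro φ
  obtain ⟨_, ⟨ψ, rfl⟩, hψ⟩ := exists_eventually_add_smul_mem_maxConcentrated
    (L := LinearMap.range (T : Φ →ₗ[ℝ] C(X, ℝ)))
    (fun x y hxy => by simpa [LinearMap.mem_range] using hT x y hxy) (T φ) hr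
  refine mem_closure_of_tendsto (f := fun t : ℝ => φ + t • ψ) ?_ (by simpa using hψ)
  exact (Continuous.tendsto' (by fun_prop) 0 φ (by simp)).mono_left nhdsWithin_le_nhds

theorem residual_setOf_exists_forall_lt [BaireSpace Φ] {X : Type*} [TopologicalSpace X]
    [CompactSpace X] [MetrizableSpace X] [Nonempty X]
    (T : Φ →L[ℝ] C(X, ℝ)) (hT : ∀ x y, x ≠ y → ∃ φ, T φ x ≠ T φ y) :
    {φ | ∃ x, ∀ y, y ≠ x → T φ y < T φ x} ∈ residual Φ := by
  let := metrizableSpaceMetric X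
  have hopen : ∀ n : ℕ, IsOpen (T ⁻¹' maxConcentrated X (1 / (n + 1))) :=
    fun n => (isOpen_maxConcentrated _).preimage T.continuous
  refine mem_residual.mpr ⟨⋂ n : ℕ, T ⁻¹' maxConcentrated X (1 / (n + 1)),
    fun φ hφ => exists_forall_lt_of_forall_mem_maxConcentrated fun n => mem_iInter.mp hφ n,
    .iInter fun n => (hopen n).isGδ,
    dense_iInter_of_isOpen hopen fun n => dense_preimage_maxConcentrated T hT (by positivity)⟩

end Residual

lemma le_of_forall_mem_le_of_dense {Φ X : Type*} [TopologicalSpace Φ] [TopologicalSpace X]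
    [CompactSpace X] {T : Φ → C(X, ℝ)} (hT : Continuous T) {A : Set X}
    (hA : Dense {ψ | ∃ a ∈ A, ∀ z, T ψ z ≤ T ψ a}) {φ : Φ} {c : ℝ}
    (hφ : ∀ a ∈ A, T φ a ≤ c) (z : X) : T φ z ≤ c := by
  by_contra! hz
  have hε : 0 < (T φ z - c) / 2 := by linarith
  obtain ⟨ψ, ⟨a, ha, hψa⟩, hψφ⟩ :=
    hA.exists_mem_open (isOpen_ball.preimage hT) ⟨φ, mem_ball_self hε⟩
  have hz' := abs_lt.mp ((ContinuousMap.dist_apply_le_dist z).trans_lt (mem_ball.mp hψφ))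
  have ha' := abs_lt.mp ((ContinuousMap.dist_apply_le_dist a).trans_lt (mem_ball.mp hψφ))
  linarith [hψa z, hφ a ha]

noncomputable def restrictCLM {S Φ : Type*} [TopologicalSpace S] [NormedAddCommGroup Φ]
    [NormedSpace ℝ Φ] (ι : Φ →ₗ[ℝ] (S → ℝ)) (K : Set S) [CompactSpace K] [Nonempty K]
    (hcont : ∀ φ, ContinuousOn (ι φ) K) (α : ℝ) (hbound : ∀ φ, ∀ x ∈ K, |ι φ x| ≤ α * ‖φ‖) :
    Φ →L[ℝ] C(K, ℝ) :=
  LinearMap.mkContinuous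
    { toFun φ := ⟨K.domRestrict (ι φ), continuousOn_iff_continuous_domRestrict.mp (hcont φ)⟩
      map_add' := fun φ ψ => by ext; simp
      map_smul' := fun c φ => by ext; simp }
    α fun φ => (ContinuousMap.norm_le_of_nonempty _).mpr fun x => hbound φ x x.2

theorem stmt_8_general {S : Type*} [TopologicalSpace S]
    {Φ : Type*} [NormedAddCommGroup Φ] [NormedSpace ℝ Φ] [CompleteSpace Φ]
    (ι : Φ →ₗ[ℝ] (S → ℝ))
    (K : Set S) (hne : K.Nonempty) (hcomp : IsCompact K)
    (hmetr : TopologicalSpace.MetrizableSpace K)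
    (hKconv : IsPhiConvex (fun φ => ι φ) K)
    (hcont : ∀ φ : Φ, ContinuousOn (ι φ) K)
    (αK : ℝ) (hbound : ∀ φ : Φ, ∀ x ∈ K, |ι φ x| ≤ αK * ‖φ‖)
    (hsep : ∀ x ∈ K, ∀ y ∈ K, x ≠ y → ∃ φ : Φ, ι φ x ≠ ι φ y) :
    (∃ G : Set Φ, Dense G ∧ IsGδ G ∧
        G ⊆ {φ : Φ | ∃ x ∈ K, ∀ y ∈ K, y ≠ x → ι φ y < ι φ x}) ∧
      (phiExposedPoints (fun φ => ι φ) K).Nonempty ∧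
      K = phiConvexHull (fun φ => ι φ) (phiExposedPoints (fun φ => ι φ) K) := by
  have : CompactSpace K := isCompact_iff_compactSpace.mp hcomp
  have : Nonempty K := hne.to_subtype
  let T := restrictCLM ι K hcont αK hbound
  obtain ⟨G, hGmax, hGδ, hGd⟩ := mem_residual.mp <| residual_setOf_exists_forall_lt T
    fun x y hxy => hsep x x.2 y y.2 (Subtype.coe_ne_coe.mpr hxy)
  have hGexp : G ⊆ {φ : Φ | ∃ x ∈ K, ∀ y ∈ K, y ≠ x → ι φ y < ι φ x} := fun φ hφ => by
    obtain ⟨x, hx⟩ := hGmax hφ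
    exact ⟨x, x.2, fun y hy hyx => hx ⟨y, hy⟩ (Subtype.coe_ne_coe.mp hyx)⟩
  refine ⟨⟨G, hGd, hGδ, hGexp⟩, ?_, ?_⟩
  · obtain ⟨φ, hφ⟩ := hGd.nonempty
    obtain ⟨x, hxK, hx⟩ := hGexp hφ
    exact ⟨x, hxK, φ, hx⟩
  refine (phiConvexHull_subset hKconv fun x hx => hx.1).antisymm'
    (subset_phiConvexHull_of_forall_le fun φ c hc z hz => ?_)
  refine le_of_forall_mem_le_of_dense T.continuous
    (A := Subtype.val ⁻¹' phiExposedPoints (fun φ => ι φ) K) (hGd.mono fun ψ hψ => ?_)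
    (fun a ha => hc a ha) ⟨z, hz⟩
  obtain ⟨x, hxK, hx⟩ := hGexp hψ
  refine ⟨⟨x, hxK⟩, ⟨hxK, ψ, hx⟩, fun y => ?_⟩
  rcases eq_or_ne (y : S) x with hyx | hyx
  · exact (congrArg (ι ψ) hyx).le
  · exact (hx y y.2 hyx).le

/-- **Krein–Milman theorem with `Φ`-exposed points (metrizable case).** Let `S` be a Hausdorff
space, `Φ` a Banach space of real-valued functions on `S`, and `K` a nonempty compact
metrizable `Φ`-convex subset of `S` such that every `φ ∈ Φ` is continuous on `K` and bounded
on `K` by `α_K ‖φ‖`, and `Φ` separates the points of `K`. Then (i) the set of `φ ∈ Φ` that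
attain a strict maximum on `K` contains a dense `Gδ` subset of `Φ` (in particular `K` has a
`Φ`-exposed point), and (ii) `K` is the `Φ`-convex hull of its `Φ`-exposed points. -/
theorem stmt_8 {S : Type*} [TopologicalSpace S] [T2Space S]
    {Φ : Type*} [NormedAddCommGroup Φ] [NormedSpace ℝ Φ] [CompleteSpace Φ]
    (ι : Φ →ₗ[ℝ] (S → ℝ)) (hinj : Function.Injective ι)
    (K : Set S) (hne : K.Nonempty) (hcomp : IsCompact K)
    (hmetr : TopologicalSpace.MetrizableSpace K)
    (hKconv : IsPhiConvex (fun φ => ι φ) K)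
    (hcont : ∀ φ : Φ, ContinuousOn (ι φ) K)
    (αK : ℝ) (hαK : 0 ≤ αK) (hbound : ∀ φ : Φ, ∀ x ∈ K, |ι φ x| ≤ αK * ‖φ‖)
    (hsep : ∀ x ∈ K, ∀ y ∈ K, x ≠ y → ∃ φ : Φ, ι φ x ≠ ι φ y) :
    (∃ G : Set Φ, Dense G ∧ IsGδ G ∧
        G ⊆ {φ : Φ | ∃ x ∈ K, ∀ y ∈ K, y ≠ x → ι φ y < ι φ x}) ∧
      (phiExposedPoints (fun φ => ι φ) K).Nonempty ∧
      K = phiConvexHull (fun φ => ι φ) (phiExposedPoints (fun φ => ι φ) K) :=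
  stmt_8_general ι K hne hcomp hmetr hKconv hcont αK hbound hsep
end

section
/- Let E be a real Banach space and let K be a convex subset of the dual space E* that is compact and metrizable in the weak* topology. Then K is the weak* closed convex hull of its weak* exposed points: K = the weak* closure of the convex hull of w*Exp(K). -/
/-!
The support function `σ x = max_{p ∈ K} p x` is Lipschitz on `E`, since `K` is norm bounded.
Fix a metric on `K`. For each `n`, the set of `x` admitting a slice `{p ∈ K | σ x - δ < p x}`
of diameter at most `1 / n` is open, and it is dense: by Choquet's lemma an extreme point of the
face on which `x` attains `σ x` has arbitrarily small slices, in some direction `z`, and `x + τ z`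
then has such a slice for every `τ > 0`. By Baire's theorem a dense set of `x` has a unique
maximiser on `K`, which is a weak* exposed point. A point of `K` outside the closed convex hull
of these points would be separated from it by some `x₀`; approximating `x₀` by such an `x`, the
Lipschitz bounds put the maximiser of `x` on the wrong side of the separating hyperplane.
-/

open Set Filter Topology

section LocallyConvex

variable {W : Type*} [AddCommGroup W] [Module ℝ W] [TopologicalSpace W]
  [IsTopologicalAddGroup W] [ContinuousSMul ℝ W]

theorem IsCompact.convexJoin {s t : Set W} (hs : IsCompact s) (ht : IsCompact t) :
    IsCompact (_root_.convexJoin ℝ s t) := by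
  have : _root_.convexJoin ℝ s t =
      (fun q : W × W × ℝ => (1 - q.2.2) • q.1 + q.2.2 • q.2.1) '' (s ×ˢ t ×ˢ Icc 0 1) := by
    ext z
    simp only [mem_convexJoin, segment_eq_image, mem_image, mem_prod, mem_Icc, Prod.exists]
    exact ⟨fun ⟨a, ha, b, hb, θ, hθ, h⟩ => ⟨a, b, θ, ⟨ha, hb, hθ⟩, h⟩,
      fun ⟨a, b, θ, ⟨ha, hb, hθ⟩, h⟩ => ⟨a, ha, b, hb, θ, hθ, h⟩⟩
  rw [this]
  exact (hs.prod (ht.prod isCompact_Icc)).image (by fun_prop)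

theorem IsCompact.convexHull_union {s t : Set W} (hs : IsCompact s) (ht : IsCompact t)
    (hsc : Convex ℝ s) (htc : Convex ℝ t) : IsCompact (convexHull ℝ (s ∪ t)) := by
  rcases s.eq_empty_or_nonempty with rfl | hs₀
  · simpa [htc.convexHull_eq] using ht
  rcases t.eq_empty_or_nonempty with rfl | ht₀
  · simpa [hsc.convexHull_eq] using hs
  rw [hsc.convexHull_union htc hs₀ ht₀]
  exact hs.convexJoin ht

theorem isCompact_convexHull_biUnion {ι : Type*} (t : Finset ι) {C : ι → Set W}
    (hconv : ∀ i ∈ t, Convex ℝ (C i)) (hcomp : ∀ i ∈ t, IsCompact (C i)) :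
    IsCompact (convexHull ℝ (⋃ i ∈ t, C i)) := by
  classical
  induction t using Finset.induction_on with
  | empty => simp
  | insert a t _ ih =>
    simp only [Finset.forall_mem_insert] at hconv hcomp
    rw [Finset.set_biUnion_insert, ← convexHull_convexHull_union_right]
    exact hcomp.1.convexHull_union (ih hconv.2 hcomp.2) hconv.1 (convex_convexHull ℝ _)

theorem IsCompact.exists_mem_extremePoints_forall_le [T2Space W] [LocallyConvexSpace ℝ W]
    {K : Set W} (hK : IsCompact K) (hne : K.Nonempty) (l : StrongDual ℝ W) :
    ∃ p ∈ K.extremePoints ℝ, ∀ q ∈ K, l q ≤ l p := by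
  have hF : IsExposed ℝ K {p ∈ K | ∀ q ∈ K, l q ≤ l p} := fun _ => ⟨l, rfl⟩
  obtain ⟨z, hzK, hz⟩ := hK.exists_isMaxOn hne l.continuous.continuousOn
  obtain ⟨p, hp⟩ := (hF.isCompact hK).extremePoints_nonempty ⟨z, hzK, hz⟩
  exact ⟨p, hF.isExtreme.extremePoints_subset_extremePoints hp, hp.1.2⟩

/-- Choquet's lemma. The finitely many compact convex pieces `C q` cover `K \ U` and miss `p`;
as `p` is extreme, it also misses their convex hull, which is compact and can be separated from
`p`. -/
theorem exists_slice_subset_of_mem_extremePoints [LocallyConvexSpace ℝ W] [T1Space W]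
    {K U : Set W} (hK : IsCompact K) (hKc : Convex ℝ K) {p : W} (hp : p ∈ K.extremePoints ℝ)
    (hU : IsOpen U) (hpU : p ∈ U) :
    ∃ (l : StrongDual ℝ W) (c : ℝ), c < l p ∧ ∀ q ∈ K, c < l q → q ∈ U := by
  have hsep : ∀ q ∈ K \ U, ∃ f : StrongDual ℝ W, f q < f p := fun q hq =>
    geometric_hahn_banach_point_point fun h => hq.2 (h ▸ hpU)
  choose! f hf using hsep
  set C : W → Set W := fun q => K ∩ {r | f q r ≤ (f q q + f q p) / 2}
  obtain ⟨t, htD, hcover⟩ := (hK.diff hU).elim_nhds_subcover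
    (fun q => {r | f q r ≤ (f q q + f q p) / 2})
    (fun q hq => (f q).continuous.tendsto q (Iic_mem_nhds (by linarith [hf q hq])))
  set H := convexHull ℝ (⋃ q ∈ t, C q)
  have hHK : H ⊆ K := convexHull_min (iUnion₂_subset fun _ _ => inter_subset_left) hKc
  have hH : IsCompact H := isCompact_convexHull_biUnion t
    (fun q _ => hKc.inter ((convex_Iic _).linear_preimage (f q).toLinearMap))
    (fun q _ => hK.inter_right (isClosed_le (f q).continuous continuous_const))
  have hpH : p ∉ H := by
    intro hpH
    obtain ⟨q, hq, hpq⟩ := mem_iUnion₂.1 <| extremePoints_convexHull_subset <|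
      inter_extremePoints_subset_extremePoints_of_subset hHK ⟨hpH, hp⟩
    linarith [hf q (htD q hq), show f q p ≤ _ from hpq.2]
  obtain ⟨l, c, hlH, hlp⟩ :=
    geometric_hahn_banach_closed_point (convex_convexHull ℝ _) hH.isClosed hpH
  refine ⟨l, c, hlp, fun q hqK hcq => by_contra fun hqU => ?_⟩
  obtain ⟨r, hr, hqr⟩ := mem_iUnion₂.1 (hcover ⟨hqK, hqU⟩)
  exact (hlH q (subset_convexHull ℝ _ (mem_biUnion hr ⟨hqK, hqr⟩))).not_gt hcq

end LocallyConvex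

namespace WeakDual

variable {E : Type*} [NormedAddCommGroup E] [NormedSpace ℝ E]

instance instLocallyConvexSpace : LocallyConvexSpace ℝ (WeakDual ℝ E) :=
  WeakBilin.locallyConvexSpace

theorem exists_eq_eval (f : StrongDual ℝ (WeakDual ℝ E)) :
    ∃ x : E, ∀ p : WeakDual ℝ E, f p = p x := by
  obtain ⟨x, rfl⟩ := LinearMap.dualEmbedding_surjective (topDualPairing ℝ E) f
  exact ⟨x, fun _ => rfl⟩

theorem exists_norm_le_of_isCompact [CompleteSpace E] {K : Set (WeakDual ℝ E)}
    (hK : IsCompact K) : ∃ M, ∀ p ∈ K, ‖toStrongDual p‖ ≤ M :=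
  (isBounded_iff_forall_norm_le (s := StrongDual.toWeakDual ⁻¹' K)).1
    ((isBounded_iff_isVonNBounded (𝕜 := ℝ)).2 (hK.isVonNBounded ℝ))

noncomputable def supportFun (K : Set (WeakDual ℝ E)) (x : E) : ℝ :=
  sSup ((fun p : WeakDual ℝ E => p x) '' K)

def slice (K : Set (WeakDual ℝ E)) (x : E) (δ : ℝ) : Set (WeakDual ℝ E) :=
  {p ∈ K | supportFun K x - δ < p x}

variable {K : Set (WeakDual ℝ E)} {p : WeakDual ℝ E} {x y : E} {δ δ' M : ℝ}

theorem apply_le_supportFun (hK : IsCompact K) (hp : p ∈ K) : p x ≤ supportFun K x :=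
  le_csSup (hK.image (eval_continuous x)).bddAbove ⟨p, hp, rfl⟩

theorem supportFun_eq_of_forall_le (hp : p ∈ K) (hmax : ∀ q ∈ K, q x ≤ p x) :
    supportFun K x = p x :=
  IsGreatest.csSup_eq ⟨⟨p, hp, rfl⟩, by rintro _ ⟨q, hq, rfl⟩; exact hmax q hq⟩

theorem mem_slice_of_forall_le (hp : p ∈ K) (hmax : ∀ q ∈ K, q x ≤ p x) (hδ : 0 < δ) :
    p ∈ slice K x δ :=
  ⟨hp, by rw [supportFun_eq_of_forall_le hp hmax]; linarith⟩

theorem apply_le_apply_add (p : WeakDual ℝ E) (x y : E) :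
    p x ≤ p y + ‖toStrongDual p‖ * ‖x - y‖ := by
  have h := (le_abs_self _).trans ((toStrongDual p).le_opNorm (x - y))
  rw [map_sub] at h
  change p x - p y ≤ _ at h
  linarith

theorem supportFun_le_add (hK : IsCompact K) (hne : K.Nonempty)
    (hM : ∀ p ∈ K, ‖toStrongDual p‖ ≤ M) (x y : E) :
    supportFun K x ≤ supportFun K y + M * ‖x - y‖ := by
  refine csSup_le (hne.image _) ?_
  rintro _ ⟨p, hp, rfl⟩
  calc p x ≤ p y + ‖toStrongDual p‖ * ‖x - y‖ := apply_le_apply_add p x y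
    _ ≤ supportFun K y + M * ‖x - y‖ :=
      add_le_add (apply_le_supportFun hK hp) (by gcongr; exact hM p hp)

theorem slice_subset_slice (hK : IsCompact K) (hM : ∀ p ∈ K, ‖toStrongDual p‖ ≤ M)
    (h : δ' + 2 * M * ‖x - y‖ ≤ δ) : slice K y δ' ⊆ slice K x δ := by
  rintro p ⟨hp, hpy⟩
  refine ⟨hp, ?_⟩
  have h₁ := supportFun_le_add hK ⟨p, hp⟩ hM x y
  have h₂ : p y ≤ p x + M * ‖x - y‖ :=
    (apply_le_apply_add p y x).trans (by rw [norm_sub_rev]; gcongr; exact hM p hp)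
  linarith

theorem eventually_slice_subset_slice (hK : IsCompact K) (hM : ∀ p ∈ K, ‖toStrongDual p‖ ≤ M)
    (h : δ' < δ) (x : E) : ∀ᶠ y in 𝓝 x, slice K y δ' ⊆ slice K x δ := by
  have hcont : Continuous fun y => δ' + 2 * M * ‖x - y‖ := by fun_prop
  filter_upwards [hcont.continuousAt.eventually_lt continuousAt_const (by simpa using h)]
    with y hy using slice_subset_slice hK hM hy.le

theorem slice_add_smul_subset (hK : IsCompact K) (hp : p ∈ K) (hmax : ∀ q ∈ K, q x ≤ p x)
    {τ : ℝ} (hτ : 0 < τ) (z : E) (c : ℝ) :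
    slice K (x + τ • z) (τ * (p z - c)) ⊆ {q ∈ K | c < q z} := by
  rintro q ⟨hq, hqs⟩
  refine ⟨hq, ?_⟩
  have h₁ := apply_le_supportFun (x := x + τ • z) hK hp
  have h₂ := hmax q hq
  simp only [map_add, map_smul, smul_eq_mul] at h₁ hqs
  exact lt_of_mul_lt_mul_left (by linarith) hτ.le

theorem mem_closure_setOf_slice_subset (hK : IsCompact K) (hKc : Convex ℝ K)
    (hp : p ∈ K.extremePoints ℝ) (hmax : ∀ q ∈ K, q x ≤ p x) {V : Set (WeakDual ℝ E)}
    (hV : IsOpen V) (hpV : p ∈ V) : x ∈ closure {y | ∃ δ > 0, slice K y δ ⊆ V} := by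
  obtain ⟨l, c, hcl, hlV⟩ := exists_slice_subset_of_mem_extremePoints hK hKc hp hV hpV
  obtain ⟨z, hz⟩ := exists_eq_eval l
  rw [hz] at hcl
  have hlim : Tendsto (fun τ : ℝ => x + τ • z) (𝓝[>] 0) (𝓝 x) := by
    have : Continuous fun τ : ℝ => x + τ • z := by fun_prop
    simpa using (this.tendsto 0).mono_left nhdsWithin_le_nhds
  refine mem_closure_of_tendsto hlim (eventually_nhdsWithin_of_forall fun τ (hτ : 0 < τ) => ?_)
  refine ⟨τ * (p z - c), mul_pos hτ (sub_pos.2 hcl), fun q hq => ?_⟩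
  obtain ⟨hqK, hcq⟩ := slice_add_smul_subset hK (extremePoints_subset hp) hmax hτ z c hq
  exact hlV q hqK (by rwa [hz])

open scoped ENNReal in
theorem dense_setOf_exposes [CompleteSpace E] (hK : IsCompact K) (hKc : Convex ℝ K)
    (hne : K.Nonempty) [TopologicalSpace.MetrizableSpace K] :
    Dense {x : E | ∃ p ∈ K, ∀ q ∈ K, q ≠ p → q x < p x} := by
  have hext (x : E) : ∃ p ∈ K.extremePoints ℝ, ∀ q ∈ K, q x ≤ p x :=
    (hK.exists_mem_extremePoints_forall_le hne) (WeakBilin.eval (topDualPairing ℝ E) x)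
  let := TopologicalSpace.metrizableSpaceMetric K
  obtain ⟨M, hM⟩ := exists_norm_le_of_isCompact hK
  set G : ℕ → Set E := fun n =>
    {x | ∃ δ > 0, Metric.ediam ((↑) ⁻¹' slice K x δ : Set K) ≤ (n : ℝ≥0∞)⁻¹}
  have hGo : ∀ n, IsOpen (G n) := by
    refine fun n => isOpen_iff_mem_nhds.2 fun x ⟨δ, hδ, hx⟩ => ?_
    filter_upwards [eventually_slice_subset_slice hK hM (half_lt_self hδ) x] with y hy
    exact ⟨δ / 2, half_pos hδ, (Metric.ediam_mono (preimage_mono hy)).trans hx⟩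
  have hGd : ∀ n, Dense (G n) := by
    intro n x
    obtain ⟨p, hp, hmax⟩ := hext x
    set p' : K := ⟨p, extremePoints_subset hp⟩
    obtain ⟨V, hV, hVball⟩ :=
      isOpen_induced_iff.1 (Metric.isOpen_eball (x := p') (ε := (2 * n : ℝ≥0∞)⁻¹))
    have hpV : p ∈ V := show p' ∈ (↑) ⁻¹' V from
      hVball ▸ Metric.mem_eball_self (by simp [ENNReal.mul_eq_top])
    refine closure_mono ?_ (mem_closure_setOf_slice_subset hK hKc hp hmax hV hpV)
    rintro y ⟨δ, hδ, hy⟩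
    have hsub : ((↑) ⁻¹' slice K y δ : Set K) ⊆ Metric.eball p' (2 * n : ℝ≥0∞)⁻¹ :=
      hVball ▸ preimage_mono hy
    refine ⟨δ, hδ, (Metric.ediam_mono hsub).trans (Metric.ediam_eball_le.trans (le_of_eq ?_))⟩
    rw [ENNReal.mul_inv (by simp) (by simp), ← mul_assoc,
      ENNReal.mul_inv_cancel two_ne_zero ENNReal.ofNat_ne_top, one_mul]
  refine (dense_iInter_of_isOpen hGo hGd).mono fun x hx => ?_
  obtain ⟨p, hp, hmax⟩ := hK.exists_isMaxOn hne (eval_continuous x).continuousOn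
  refine ⟨p, hp, fun q hq hqp => (hmax hq).lt_of_ne fun hqx => hqp ?_⟩
  have hmax' : ∀ r ∈ K, r x ≤ q x := fun r hr => hqx ▸ hmax hr
  suffices edist (⟨q, hq⟩ : K) ⟨p, hp⟩ = 0 from congrArg Subtype.val (edist_eq_zero.1 this)
  by_contra hqp
  obtain ⟨n, hn⟩ := ENNReal.exists_inv_nat_lt hqp
  obtain ⟨δ, hδ, hdiam⟩ := mem_iInter.1 hx n
  have hq' : (⟨q, hq⟩ : K) ∈ (↑) ⁻¹' slice K x δ := mem_slice_of_forall_le hq hmax' hδ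
  have hp' : (⟨p, hp⟩ : K) ∈ (↑) ⁻¹' slice K x δ := mem_slice_of_forall_le hp hmax hδ
  exact hn.not_ge ((Metric.edist_le_ediam_of_mem hq' hp').trans hdiam)

end WeakDual

open WeakDual in
/-- Let `E` be a real Banach space and `K` a convex, weak* compact, weak* metrizable subset
of `E*`. Then `K` is the weak* closed convex hull of its weak* exposed points. -/
theorem stmt_9 {E : Type*} [NormedAddCommGroup E] [NormedSpace ℝ E] [CompleteSpace E]
    (K : Set (WeakDual ℝ E)) (hconv : Convex ℝ K) (hcomp : IsCompact K)
    (hmetr : TopologicalSpace.MetrizableSpace K) :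
    K = closure (convexHull ℝ
      {p ∈ K | ∃ x : E, ∀ q ∈ K, q ≠ p → q x < p x}) := by
  rcases K.eq_empty_or_nonempty with rfl | hne
  · simp
  set D := {p ∈ K | ∃ x : E, ∀ q ∈ K, q ≠ p → q x < p x}
  refine (closure_minimal (convexHull_min (fun p hp => hp.1) hconv) hcomp.isClosed).antisymm'
    fun w hw => by_contra fun hwD => ?_
  obtain ⟨f, u, hfD, hfw⟩ :=
    geometric_hahn_banach_closed_point (convex_convexHull ℝ D).closure isClosed_closure hwD
  obtain ⟨x, hx⟩ := exists_eq_eval f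
  obtain ⟨M, hM⟩ := exists_norm_le_of_isCompact hcomp
  have hu : u < supportFun K x := (hx w ▸ hfw).trans_le (apply_le_supportFun hcomp hw)
  obtain ⟨y, hy, p, hpK, hexp⟩ := mem_closure_iff_nhds.1 (dense_setOf_exposes hcomp hconv hne x) _
    (eventually_slice_subset_slice hcomp hM (half_lt_self (sub_pos.2 hu)) x)
  have hmax : ∀ q ∈ K, q y ≤ p y := fun q hq =>
    (eq_or_ne q p).elim (fun h => h ▸ le_rfl) fun h => (hexp q hq h).le
  have hpx : u < p x := by
    simpa using (hy (mem_slice_of_forall_le hpK hmax (half_pos (sub_pos.2 hu)))).2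
  have hpD : f p < u := hfD p (subset_closure (subset_convexHull ℝ D ⟨hpK, y, hexp⟩))
  linarith [hx p]
end

section
/- Let E be a real Banach space and let K be a convex subset of E that is compact and metrizable in the weak topology of E. Then K is the closed convex hull of its exposed points: K equals the norm closure of the convex hull of Exp(K), which also equals the weak closure of the convex hull of Exp(K). -/
/-!
Pick countably many functionals separating the points of `K` (possible because `K` is compact
metrizable) and rescale them so that `T w = (c_n f_n w)_n` is a continuous linear map `E → ℓ²`.
`T` is injective on `K`, and weak-to-norm continuous on `K` because `K` is norm bounded, so it
identifies `K` with a norm-compact convex subset of a Hilbert space. There, a point `p` farthest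
from some centre `z` is exposed by `⟪p - z, ·⟫`, and every point outside a closed bounded convex
set `D` is farther from a suitable centre than all of `D`; so a compact set lies in the closed
convex hull of its farthest points. Exposing functionals pull back along `T`, and Mazur's lemma
turns the weak closure into the norm closure.
-/

open Set TopologicalSpace
open scoped lp RealInnerProductSpace

section Hilbert

variable {H : Type*} [NormedAddCommGroup H] [InnerProductSpace ℝ H]

lemma mem_exposedPoints_of_isMaxOn_norm_sub {C : Set H} {p z : H} (hp : p ∈ C)
    (hmax : IsMaxOn (fun q => ‖q - z‖) C p) : p ∈ C.exposedPoints ℝ := by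
  refine ⟨hp, innerSL ℝ (p - z), fun q hq => ?_⟩
  have hsq : ‖q - z‖ ^ 2 ≤ ‖p - z‖ ^ 2 := pow_le_pow_left₀ (norm_nonneg _) (hmax hq) 2
  have key : 2 * ⟪p - z, q - p⟫ + ‖q - p‖ ^ 2 ≤ 0 := by
    rw [show q - z = (p - z) + (q - p) by abel, norm_add_sq_real] at hsq
    linarith
  rw [inner_sub_right] at key
  simp only [innerSL_apply_apply]
  refine ⟨by nlinarith [sq_nonneg ‖q - p‖], fun h => ?_⟩
  have : ‖q - p‖ ^ 2 ≤ 0 := by linarith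
  simpa [sub_eq_zero] using this

lemma exists_forall_norm_sub_lt_of_notMem [CompleteSpace H] {D : Set H} (hconv : Convex ℝ D)
    (hclosed : IsClosed D) (hbdd : Bornology.IsBounded D) {x : H} (hx : x ∉ D) :
    ∃ z, ∀ y ∈ D, ‖y - z‖ < ‖x - z‖ := by
  -- Separate `x` from `D` by `⟪v, ·⟫` and move the centre far out along `-v`.
  obtain ⟨f, u, hfD, hux⟩ := geometric_hahn_banach_closed_point hconv hclosed hx
  obtain ⟨M, hM⟩ := hbdd.subset_closedBall x
  set v := (InnerProductSpace.toDual ℝ H).symm f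
  have hv : ∀ y, ⟪v, y⟫ = f y := fun _ => InnerProductSpace.toDual_symm_apply
  set ε := f x - u
  have hε : 0 < ε := sub_pos.2 hux
  set s := (M ^ 2 + 1) / (2 * ε)
  refine ⟨x - s • v, fun y hy => ?_⟩
  have hyx : ‖y - x‖ ≤ M := by simpa [dist_eq_norm] using hM hy
  have hinner : ⟪y - x, v⟫ < -ε := by
    rw [real_inner_comm, inner_sub_right, hv, hv]; linarith [hfD y hy]
  have hs : 2 * s * ε = M ^ 2 + 1 := by simp only [s]; field_simp
  have hs0 : 0 < s := by positivity
  rw [show y - (x - s • v) = (y - x) + s • v by abel, show x - (x - s • v) = s • v by abel,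
    ← sq_lt_sq₀ (norm_nonneg _) (norm_nonneg _), norm_add_sq_real, inner_smul_right]
  nlinarith [sq_nonneg ‖y - x‖, norm_nonneg (y - x)]

theorem IsCompact.subset_closure_convexHull_exposedPoints [CompleteSpace H] {C : Set H}
    (hC : IsCompact C) : C ⊆ closure (convexHull ℝ (C.exposedPoints ℝ)) := by
  intro x hx
  by_contra hxD
  obtain ⟨z, hz⟩ := exists_forall_norm_sub_lt_of_notMem (convex_convexHull ℝ _).closure
    isClosed_closure
    (isBounded_convexHull.2 (hC.isBounded.subset exposedPoints_subset)).closure hxD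
  obtain ⟨p, hpC, hmax⟩ :=
    hC.exists_isMaxOn ⟨x, hx⟩ (by fun_prop : Continuous fun q => ‖q - z‖).continuousOn
  have hpD :=
    subset_closure (subset_convexHull ℝ _ (mem_exposedPoints_of_isMaxOn_norm_sub hpC hmax))
  exact (hz p hpD).not_ge (hmax hx)

end Hilbert

theorem Convex.subset_closure_convexHull_exposed_of_injOn {V H : Type*} [AddCommGroup V]
    [Module ℝ V] [TopologicalSpace V] [IsTopologicalAddGroup V] [ContinuousConstSMul ℝ V]
    [T2Space V] [NormedAddCommGroup H] [InnerProductSpace ℝ H] [CompleteSpace H] {K : Set V}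
    (hconv : Convex ℝ K) (hcomp : IsCompact K) (T : V →ₗ[ℝ] H) (hinj : InjOn T K)
    (hcont : ContinuousOn T K) :
    K ⊆ closure (convexHull ℝ
      {p ∈ K | ∃ l : StrongDual ℝ H, ∀ q ∈ K, q ≠ p → l (T q) < l (T p)}) := by
  set D := closure (convexHull ℝ
    {p ∈ K | ∃ l : StrongDual ℝ H, ∀ q ∈ K, q ≠ p → l (T q) < l (T p)})
  have hDK : D ⊆ K := closure_minimal (convexHull_min (sep_subset _ _) hconv) hcomp.isClosed
  have hTD : IsCompact (T '' D) :=
    (hcomp.of_isClosed_subset isClosed_closure hDK).image_of_continuousOn (hcont.mono hDK)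
  have hexp : (T '' K).exposedPoints ℝ ⊆ T '' D := by
    rintro _ ⟨⟨p, hp, rfl⟩, l, hl⟩
    refine ⟨p, subset_closure (subset_convexHull ℝ _ ⟨hp, l, fun q hq hqp => ?_⟩), rfl⟩
    obtain ⟨hle, heq⟩ := hl (T q) ⟨q, hq, rfl⟩
    exact hle.lt_of_ne fun h => hqp (hinj hq hp (heq h.ge))
  intro x hx
  obtain ⟨d, hd, hdx⟩ := closure_minimal
    (convexHull_min hexp ((convex_convexHull ℝ _).closure.linear_image T)) hTD.isClosed
    ((hcomp.image_of_continuousOn hcont).subset_closure_convexHull_exposedPoints ⟨x, hx, rfl⟩)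
  exact hinj (hDK hd) hx hdx ▸ hd

lemma hasSum_sq_half_pow_mul (c : ℝ) :
    HasSum (fun n : ℕ => ((1 / 2 : ℝ) ^ n * c) ^ 2) (4 / 3 * c ^ 2) := by
  have h := (hasSum_geometric_of_lt_one (by norm_num : (0 : ℝ) ≤ 1 / 4) (by norm_num)).mul_right
    (c ^ 2)
  rw [show (1 - 1 / 4 : ℝ)⁻¹ * c ^ 2 = 4 / 3 * c ^ 2 by norm_num] at h
  have hterm : (fun n : ℕ => ((1 / 2 : ℝ) ^ n * c) ^ 2) = fun n => (1 / 4) ^ n * c ^ 2 :=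
    funext fun n => by rw [mul_pow, ← pow_mul, mul_comm n, pow_mul]; norm_num
  rwa [hterm]

section L2

variable {ι : Type*}

lemma lp.norm_sq_eq_tsum_sq (g : ℓ²(ι, ℝ)) : ‖g‖ ^ 2 = ∑' i, g i ^ 2 := by
  rw [← real_inner_self_eq_norm_sq, lp.inner_eq_tsum]
  simp [sq]

lemma lp.norm_sq_le_tsum_sq {g : ℓ²(ι, ℝ)} {b : ι → ℝ} (hb : Summable fun i => b i ^ 2)
    (hg : ∀ i, |g i| ≤ b i) : ‖g‖ ^ 2 ≤ ∑' i, b i ^ 2 := by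
  rw [lp.norm_sq_eq_tsum_sq]
  have hsq : ∀ i, g i ^ 2 ≤ b i ^ 2 := fun i => sq_le_sq' (abs_le.1 (hg i)).1 (abs_le.1 (hg i)).2
  exact (hb.of_nonneg_of_le (fun i => sq_nonneg _) hsq).tsum_le_tsum hsq hb

lemma memℓp_two_of_abs_le {f b : ι → ℝ} (hb : Summable fun i => b i ^ 2)
    (hf : ∀ i, |f i| ≤ b i) : Memℓp f 2 := by
  refine memℓp_gen (hb.of_nonneg_of_le (fun i => by positivity) fun i => ?_)
  rw [show (2 : ENNReal).toReal = (2 : ℕ) by simp, Real.rpow_natCast, Real.norm_eq_abs]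
  exact pow_le_pow_left₀ (abs_nonneg _) (hf i) 2

lemma lp.continuous_of_abs_apply_le {X : Type*} [TopologicalSpace X] {F : X → ℓ²(ι, ℝ)}
    (hF : ∀ i, Continuous fun x => F x i) {b : ι → ℝ} (hb : Summable fun i => b i ^ 2)
    (hFb : ∀ x i, |F x i| ≤ b i) : Continuous F := by
  refine continuous_iff_continuousAt.2 fun x₀ => tendsto_iff_norm_sub_tendsto_zero.2 ?_
  have hsq : Continuous fun x => ‖F x - F x₀‖ ^ 2 := by
    simp only [lp.norm_sq_eq_tsum_sq, lp.coeFn_sub, Pi.sub_apply]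
    refine continuous_tsum (fun i => ((hF i).sub continuous_const).pow 2)
      (hb.mul_left 4) fun i x => ?_
    have htri := abs_sub (F x i) (F x₀ i)
    rw [Real.norm_eq_abs, abs_pow]
    nlinarith [hFb x i, hFb x₀ i, abs_nonneg (F x i - F x₀ i)]
  simpa [Function.comp_def, Real.sqrt_sq (norm_nonneg _)] using
    (Real.continuous_sqrt.comp hsq).tendsto x₀

end L2

section ToL2

variable {E : Type*} [NormedAddCommGroup E] [NormedSpace ℝ E]

noncomputable def dualSeqWeight (f : ℕ → StrongDual ℝ E) (n : ℕ) : ℝ :=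
  (1 / 2) ^ n / (1 + ‖f n‖)

lemma dualSeqWeight_pos (f : ℕ → StrongDual ℝ E) (n : ℕ) : 0 < dualSeqWeight f n := by
  unfold dualSeqWeight; positivity

lemma abs_dualSeqWeight_mul_le (f : ℕ → StrongDual ℝ E) (n : ℕ) (w : E) :
    |dualSeqWeight f n * f n w| ≤ (1 / 2) ^ n * ‖w‖ := by
  have hpos : 0 < 1 + ‖f n‖ := by positivity
  rw [abs_mul, abs_of_pos (dualSeqWeight_pos f n), dualSeqWeight, div_mul_eq_mul_div,
    div_le_iff₀ hpos, mul_assoc]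
  gcongr
  calc |f n w| ≤ ‖f n‖ * ‖w‖ := (f n).le_opNorm w
    _ ≤ ‖w‖ * (1 + ‖f n‖) := by nlinarith [norm_nonneg w]

noncomputable def dualSeqToL2 (f : ℕ → StrongDual ℝ E) : E →L[ℝ] ℓ²(ℕ, ℝ) :=
  LinearMap.mkContinuous
    { toFun := fun w => ⟨fun n => dualSeqWeight f n * f n w,
        memℓp_two_of_abs_le (hasSum_sq_half_pow_mul ‖w‖).summable
          (abs_dualSeqWeight_mul_le f · w)⟩
      map_add' := fun v w => by ext n; simp only [map_add, mul_add]; rfl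
      map_smul' := fun c w => by
        ext n
        simp only [map_smul, smul_eq_mul]
        show _ = c * (dualSeqWeight f n * f n w)
        ring }
    2 fun w => by
      refine (pow_le_pow_iff_left₀ (norm_nonneg _) (by positivity) two_ne_zero).1 ?_
      calc _ ≤ ∑' n : ℕ, ((1 / 2 : ℝ) ^ n * ‖w‖) ^ 2 :=
            lp.norm_sq_le_tsum_sq (hasSum_sq_half_pow_mul ‖w‖).summable
              (abs_dualSeqWeight_mul_le f · w)
        _ = 4 / 3 * ‖w‖ ^ 2 := (hasSum_sq_half_pow_mul ‖w‖).tsum_eq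
        _ ≤ (2 * ‖w‖) ^ 2 := by nlinarith [sq_nonneg ‖w‖]

@[simp]
lemma dualSeqToL2_apply (f : ℕ → StrongDual ℝ E) (w : E) (n : ℕ) :
    dualSeqToL2 f w n = dualSeqWeight f n * f n w := by
  simp [dualSeqToL2]

lemma dualSeqToL2_eq_iff (f : ℕ → StrongDual ℝ E) {v w : E} :
    dualSeqToL2 f v = dualSeqToL2 f w ↔ ∀ n, f n v = f n w := by
  refine ⟨fun h n => ?_, fun h => lp.ext <| funext fun n => by simp [h n]⟩
  simpa [(dualSeqWeight_pos f n).ne'] using congrArg (· n) h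

end ToL2

section Weak

variable {E : Type*} [NormedAddCommGroup E] [NormedSpace ℝ E]

lemma continuous_weakSpace_apply (g : StrongDual ℝ E) : Continuous fun p : WeakSpace ℝ E => g p :=
  WeakBilin.eval_continuous (topDualPairing ℝ E).flip g

lemma IsCompact.isBounded_toWeakSpace_preimage {K : Set (WeakSpace ℝ E)} (hK : IsCompact K) :
    Bornology.IsBounded (toWeakSpace ℝ E ⁻¹' K) := by
  -- Uniform boundedness in the dual of `StrongDual ℝ E`, which is complete even when `E` is not.
  have hcpt := hK.image (NormedSpace.inclusionInDoubleDualWeak ℝ E).continuous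
  have hbdd : Bornology.IsBounded (StrongDual.toWeakDual ⁻¹'
      (NormedSpace.inclusionInDoubleDualWeak ℝ E '' K)) :=
    WeakDual.isBounded_iff_isVonNBounded.2 (hcpt.isVonNBounded ℝ)
  exact ((NormedSpace.inclusionInDoubleDualLi (𝕜 := ℝ) (E := E)).isometry.antilipschitz
    |>.isBounded_preimage hbdd).subset fun w hw => ⟨w, hw, rfl⟩

lemma exists_seq_separating_of_secondCountable {X ι Y : Type*} [TopologicalSpace X]
    [SecondCountableTopology X] [TopologicalSpace Y] [T2Space Y] [Nonempty ι] (φ : ι → X → Y)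
    (hφ : ∀ i, Continuous (φ i)) (hsep : ∀ x y, x ≠ y → ∃ i, φ i x ≠ φ i y) :
    ∃ f : ℕ → ι, ∀ x y, (∀ n, φ (f n) x = φ (f n) y) → x = y := by
  -- The off-diagonal of `X × X` is covered by the open sets where a single `φ i` separates;
  -- extract a countable subcover.
  obtain ⟨S, hS, hU⟩ := isOpen_iUnion_countable (fun i => {q : X × X | φ i q.1 ≠ φ i q.2})
    fun i => isOpen_ne_fun ((hφ i).comp continuous_fst) ((hφ i).comp continuous_snd)
  obtain ⟨f, hf⟩ := countable_iff_exists_subset_range.1 hS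
  refine ⟨f, fun x y hxy => by_contra fun hne => ?_⟩
  obtain ⟨i, hi⟩ := hsep x y hne
  have hmem : (x, y) ∈ ⋃ i ∈ S, {q : X × X | φ i q.1 ≠ φ i q.2} := hU ▸ mem_iUnion.2 ⟨i, hi⟩
  obtain ⟨j, hj, hxyj⟩ := mem_iUnion₂.1 hmem
  obtain ⟨n, rfl⟩ := hf hj
  exact hxyj (hxy n)

lemma IsCompact.exists_seq_separating_weakSpace {K : Set (WeakSpace ℝ E)} (hK : IsCompact K)
    [MetrizableSpace K] :
    ∃ f : ℕ → StrongDual ℝ E, ∀ p ∈ K, ∀ q ∈ K, (∀ n, f n p = f n q) → p = q := by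
  let := metrizableSpaceMetric K
  have := isCompact_iff_compactSpace.1 hK
  obtain ⟨f, hf⟩ := exists_seq_separating_of_secondCountable
    (fun (g : StrongDual ℝ E) (p : K) => g p.1)
    (fun g => (continuous_weakSpace_apply g).comp continuous_subtype_val)
    fun p q hpq => SeparatingDual.exists_separating_of_ne (Subtype.val_injective.ne hpq)
  exact ⟨f, fun p hp q hq h => congrArg Subtype.val (hf ⟨p, hp⟩ ⟨q, hq⟩ h)⟩

lemma continuousOn_dualSeqToL2 (f : ℕ → StrongDual ℝ E) {K : Set (WeakSpace ℝ E)}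
    (hK : Bornology.IsBounded (toWeakSpace ℝ E ⁻¹' K)) :
    ContinuousOn (fun p : WeakSpace ℝ E => dualSeqToL2 f p) K := by
  obtain ⟨R, hR⟩ := hK.exists_norm_le
  refine continuousOn_iff_continuous_domRestrict.2 <|
    lp.continuous_of_abs_apply_le (b := fun n => (1 / 2) ^ n * R) (fun n => ?_)
      (hasSum_sq_half_pow_mul R).summable fun p n => ?_
  · exact (continuous_const.mul
      ((continuous_weakSpace_apply (f n)).comp continuous_subtype_val)).congr
        fun p => (dualSeqToL2_apply f p.1 n).symm
  · exact (abs_dualSeqWeight_mul_le f n p.1).trans (by gcongr; exact hR p.1 p.2)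

lemma IsCompact.exists_clm_injOn_continuousOn {K : Set (WeakSpace ℝ E)} (hK : IsCompact K)
    [MetrizableSpace K] : ∃ T : E →L[ℝ] ℓ²(ℕ, ℝ),
      InjOn (fun p : WeakSpace ℝ E => T p) K ∧ ContinuousOn (fun p : WeakSpace ℝ E => T p) K := by
  obtain ⟨f, hf⟩ := hK.exists_seq_separating_weakSpace
  exact ⟨dualSeqToL2 f, fun p hp q hq hpq => hf p hp q hq ((dualSeqToL2_eq_iff f).1 hpq),
    continuousOn_dualSeqToL2 f hK.isBounded_toWeakSpace_preimage⟩

end Weak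

theorem stmt_10_general {E : Type*} [NormedAddCommGroup E] [NormedSpace ℝ E]
    (K : Set (WeakSpace ℝ E)) (hconv : Convex ℝ K) (hcomp : IsCompact K)
    (hmetr : TopologicalSpace.MetrizableSpace K)
    (Exp : Set (WeakSpace ℝ E))
    (hExp : Exp = {p ∈ K | ∃ g : E →L[ℝ] ℝ, ∀ q ∈ K, q ≠ p → g q < g p}) :
    K = closure (convexHull ℝ Exp) ∧
      (show Set E from K) = closure (show Set E from convexHull ℝ Exp) := by
  obtain ⟨T, hinj, hcont⟩ := hcomp.exists_clm_injOn_continuousOn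
  have hK : K = closure (convexHull ℝ Exp) := by
    subst hExp
    refine ((hconv.subset_closure_convexHull_exposed_of_injOn hcomp
      (T.toLinearMap ∘ₗ (toWeakSpace ℝ E).symm.toLinearMap) hinj hcont).trans ?_).antisymm
      (closure_minimal (convexHull_min (sep_subset _ _) hconv) hcomp.isClosed)
    exact closure_mono (convexHull_mono fun p ⟨hp, l, hl⟩ => ⟨hp, l.comp T, hl⟩)
  have himage (s : Set E) : toWeakSpace ℝ E '' s = s := image_id s
  have hmazur := (convex_convexHull ℝ (show Set E from Exp)).toWeakSpace_closure ℝ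
  rw [himage, himage] at hmazur
  exact ⟨hK, hK.trans hmazur.symm⟩

/-- Let `E` be a real Banach space and `K` a convex, weakly compact, weakly metrizable subset
of `E`. Then `K` is the weakly closed convex hull of its exposed points, which coincides with
the norm closed convex hull of its exposed points. -/
theorem stmt_10 {E : Type*} [NormedAddCommGroup E] [NormedSpace ℝ E] [CompleteSpace E]
    (K : Set (WeakSpace ℝ E)) (hconv : Convex ℝ K) (hcomp : IsCompact K)
    (hmetr : TopologicalSpace.MetrizableSpace K)
    (Exp : Set (WeakSpace ℝ E))
    (hExp : Exp = {p ∈ K | ∃ g : E →L[ℝ] ℝ, ∀ q ∈ K, q ≠ p → g q < g p}) :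
    K = closure (convexHull ℝ Exp) ∧
      (show Set E from K) = closure (show Set E from convexHull ℝ Exp) :=
  stmt_10_general K hconv hcomp hmetr Exp hExp
end

section
/- Let X be a real Hausdorff locally convex topological vector space and let K be a nonempty convex compact metrizable subset of X. Then the set AExp(K) of affine exposed points of K is nonempty and K is the closed convex hull of its affine exposed points: K = closure(convexHull(AExp(K))). -/
/-!
Embed `K` into `ℓ²` by a continuous injective affine map `j`, built from countably many
continuous linear functionals separating the points of `K` (this is where metrizability enters).
In a Hilbert space, a point `y` of `j(K)` farthest from some `z` is strictly exposed by
`⟪y - z, ·⟫`, so the corresponding point of `K` is affinely exposed. Conversely, if some point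
`x` of `j(K)` lay outside a closed convex set `D` containing all farthest points, then moving `z`
far away from `x` in the direction of a functional separating `x` from `D` would produce a
farthest point on the side of `x`, a contradiction.
-/

open scoped ENNReal RealInnerProductSpace
open TopologicalSpace Function

local notation "ℓ²" => lp (fun _ : ℕ => ℝ) 2

section InnerProductSpace

variable {E : Type*} [NormedAddCommGroup E] [InnerProductSpace ℝ E]

theorem norm_sub_sq_add_two_inner_nonpos {x y z : E} (h : ‖x - z‖ ≤ ‖y - z‖) :
    ‖x - y‖ ^ 2 + 2 * ⟪y - z, x - y⟫ ≤ 0 := by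
  have hsplit : ‖x - z‖ ^ 2 = ‖x - y‖ ^ 2 + 2 * ⟪x - y, y - z⟫ + ‖y - z‖ ^ 2 := by
    rw [← norm_add_sq_real, sub_add_sub_cancel]
  have hsq : ‖x - z‖ ^ 2 ≤ ‖y - z‖ ^ 2 := pow_le_pow_left₀ (norm_nonneg _) h 2
  rw [real_inner_comm] at hsplit
  linarith

theorem real_inner_lt_of_norm_sub_le {x y z : E} (h : ‖x - z‖ ≤ ‖y - z‖) (hxy : x ≠ y) :
    ⟪y - z, x⟫ < ⟪y - z, y⟫ := by
  have hpos : 0 < ‖x - y‖ ^ 2 := pow_pos (norm_pos_iff.mpr (sub_ne_zero.mpr hxy)) 2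
  have := norm_sub_sq_add_two_inner_nonpos h
  rw [inner_sub_right] at this
  linarith

theorem IsCompact.subset_of_farthest_mem [CompleteSpace E] {C D : Set E} (hC : IsCompact C)
    (hD : IsClosed D) (hDconv : Convex ℝ D)
    (hfar : ∀ z, ∀ y ∈ C, (∀ x ∈ C, ‖x - z‖ ≤ ‖y - z‖) → y ∈ D) : C ⊆ D := by
  intro x hx
  by_contra hxD
  obtain ⟨f, β, hfD, hfx⟩ := geometric_hahn_banach_closed_point hDconv hD hxD
  set u : E := (InnerProductSpace.toDual ℝ E).symm f
  have hu : ∀ w, ⟪u, w⟫ = f w := fun w => InnerProductSpace.toDual_symm_apply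
  obtain ⟨r, hr⟩ := hC.isBounded.subset_closedBall x
  have hδ : 0 < f x - β := by linarith
  -- far enough that no point of `C` farther than `x` from `x - t • u` satisfies `f < β`
  set t : ℝ := (r ^ 2 + 1) / (2 * (f x - β))
  have htpos : 0 < t := by positivity
  have ht : 2 * t * (f x - β) = r ^ 2 + 1 := by
    simp only [t]; field_simp
  obtain ⟨y, hyC, hymax⟩ := hC.exists_isMaxOn ⟨x, hx⟩
    (continuous_id.sub continuous_const).norm.continuousOn (f := fun w => ‖w - (x - t • u)‖)
  have hfy : f y < β := hfD y (hfar _ y hyC fun w hw => hymax hw)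
  have hxy : ‖x - y‖ ≤ r := by
    rw [← dist_eq_norm, dist_comm]; exact hr hyC
  have hxfar := norm_sub_sq_add_two_inner_nonpos (hymax hx)
  have hinner : ⟪y - (x - t • u), x - y⟫ = -‖x - y‖ ^ 2 + t * (f x - f y) := by
    rw [show y - (x - t • u) = -(x - y) + t • u by abel, inner_add_left, inner_neg_left,
      real_inner_self_eq_norm_sq, real_inner_smul_left, hu, map_sub]
  have hsq : ‖x - y‖ ^ 2 ≤ r ^ 2 := pow_le_pow_left₀ (norm_nonneg _) hxy 2
  nlinarith [mul_lt_mul_of_pos_left (show f x - β < f x - f y by linarith) htpos]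

end InnerProductSpace

section Affine

variable {X : Type*} [AddCommGroup X] [Module ℝ X]

def IsAffineOn {F : Type*} [AddCommGroup F] [Module ℝ F] (K : Set X) (f : K → F) : Prop :=
  ∀ (a b : X) (ha : a ∈ K) (hb : b ∈ K) (l : ℝ), 0 ≤ l → l ≤ 1 →
    ∀ hm : l • a + (1 - l) • b ∈ K,
      f ⟨l • a + (1 - l) • b, hm⟩ = l • f ⟨a, ha⟩ + (1 - l) • f ⟨b, hb⟩

variable {E : Type*} [NormedAddCommGroup E] [InnerProductSpace ℝ E] {K : Set X} {j : K → E}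

theorem IsAffineOn.inner_left (hj : IsAffineOn K j) (v : E) : IsAffineOn K fun x => ⟪v, j x⟫ :=
  fun a b ha hb l hl0 hl1 hm => by
    simp only [hj a b ha hb l hl0 hl1 hm, inner_add_right, real_inner_smul_right, smul_eq_mul]

theorem IsAffineOn.convex_image (hj : IsAffineOn K j) (hK : Convex ℝ K) {S : Set X}
    (hS : Convex ℝ S) : Convex ℝ (j '' {x : K | (x : X) ∈ S}) := by
  rintro _ ⟨a, ha, rfl⟩ _ ⟨b, hb, rfl⟩ s t hs ht hst
  obtain rfl : t = 1 - s := by linarith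
  have hm := hK a.2 b.2 hs ht hst
  exact ⟨⟨_, hm⟩, hS ha hb hs ht hst, hj a b a.2 b.2 s hs (by linarith) hm⟩

variable [TopologicalSpace X]

def affineExposedPoints (K : Set X) : Set X :=
  {x | ∃ hx : x ∈ K, ∃ τ : K → ℝ, Continuous τ ∧ IsAffineOn K τ ∧
    ∀ y (hy : y ∈ K), y ≠ x → τ ⟨y, hy⟩ < τ ⟨x, hx⟩}

theorem mem_affineExposedPoints_of_farthest (hj : Continuous j) (hinj : Injective j)
    (haff : IsAffineOn K j) {x : K} {z : E} (hfar : ∀ w, ‖j w - z‖ ≤ ‖j x - z‖) :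
    (x : X) ∈ affineExposedPoints K :=
  ⟨x.2, fun w => ⟪j x - z, j w⟫, continuous_const.inner hj, haff.inner_left _,
    fun y hy hyx => real_inner_lt_of_norm_sub_le (hfar ⟨y, hy⟩)
      (hinj.ne fun h => hyx (congrArg Subtype.val h))⟩

theorem affineExposedPoints_nonempty (hK : IsCompact K) (hne : K.Nonempty)
    (hj : Continuous j) (hinj : Injective j) (haff : IsAffineOn K j) :
    (affineExposedPoints K).Nonempty := by
  have : CompactSpace K := isCompact_iff_compactSpace.mp hK
  have : Nonempty K := hne.to_subtype
  obtain ⟨x, -, hx⟩ := isCompact_univ.exists_isMaxOn Set.univ_nonempty hj.norm.continuousOn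
  exact ⟨x, mem_affineExposedPoints_of_farthest hj hinj haff (z := 0) fun w => by
    simpa using hx (Set.mem_univ w)⟩

theorem closure_convexHull_affineExposedPoints [IsTopologicalAddGroup X] [ContinuousSMul ℝ X]
    [T2Space X] [CompleteSpace E]
    (hconv : Convex ℝ K) (hK : IsCompact K) (hj : Continuous j) (hinj : Injective j)
    (haff : IsAffineOn K j) : closure (convexHull ℝ (affineExposedPoints K)) = K := by
  refine subset_antisymm
    (closure_minimal (convexHull_min (fun x hx => hx.1) hconv) hK.isClosed) fun x hx => ?_
  have : CompactSpace K := isCompact_iff_compactSpace.mp hK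
  set S := closure (convexHull ℝ (affineExposedPoints K))
  have hD : IsCompact (j '' {x : K | (x : X) ∈ S}) :=
    (isClosed_closure.preimage continuous_subtype_val).isCompact.image hj
  have hrange : Set.range j ⊆ j '' {x : K | (x : X) ∈ S} := by
    refine (isCompact_range hj).subset_of_farthest_mem hD.isClosed
      (haff.convex_image hconv (convex_convexHull ℝ _).closure) ?_
    rintro z _ ⟨y, rfl⟩ hfar
    exact ⟨y, subset_closure (subset_convexHull ℝ _ (mem_affineExposedPoints_of_farthest hj
      hinj haff fun w => hfar _ (Set.mem_range_self w))), rfl⟩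
  obtain ⟨y, hy, hyx⟩ := hrange (Set.mem_range_self ⟨x, hx⟩)
  rwa [hinj hyx] at hy

end Affine

theorem exists_continuous_lp_two_apply {A : Type*} [TopologicalSpace A] {g : ℕ → A → ℝ}
    (hg : ∀ n, Continuous (g n)) (hb : ∀ n a, |g n a| ≤ 1) :
    ∃ j : A → ℓ², Continuous j ∧ ∀ a n, j a n = 2⁻¹ ^ n * g n a := by
  have hbound : ∀ n a, ‖2⁻¹ ^ n * g n a‖ ≤ 2⁻¹ ^ n := fun n a => by
    rw [norm_mul, norm_pow, norm_inv, Real.norm_two, Real.norm_eq_abs]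
    exact mul_le_of_le_one_right (by positivity) (hb n a)
  have hsum : Summable fun n : ℕ => (2⁻¹ : ℝ) ^ n :=
    summable_geometric_of_lt_one (by norm_num) (by norm_num)
  have hmem : ∀ a, Memℓp (fun n => 2⁻¹ ^ n * g n a) 2 := by
    intro a
    have hsum_a := hsum.of_nonneg_of_le (fun _ => norm_nonneg _) (hbound · a)
    exact (memℓp_gen (p := 1) (by simpa using hsum_a)).of_exponent_ge one_le_two
  refine ⟨fun a => ⟨_, hmem a⟩, ?_, fun a n => rfl⟩
  have hj : (fun a => (⟨_, hmem a⟩ : ℓ²)) = fun a => ∑' n, lp.single 2 n (2⁻¹ ^ n * g n a) :=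
    funext fun a => (lp.hasSum_single ENNReal.ofNat_ne_top (⟨_, hmem a⟩ : ℓ²)).tsum_eq.symm
  rw [hj]
  refine continuous_tsum (fun n => ?_) hsum fun n a => ?_
  · exact (lp.singleContinuousLinearMap ℝ _ 2 n).continuous.comp (continuous_const.mul (hg n))
  · rw [lp.norm_single (by norm_num)]; exact hbound n a

section LocallyConvex

variable {X : Type*} [AddCommGroup X] [Module ℝ X] [TopologicalSpace X] [IsTopologicalAddGroup X]
  [ContinuousSMul ℝ X] [LocallyConvexSpace ℝ X] [T2Space X]

/-- Countably many of the open sets `{(x, y) | φ x ≠ φ y}` already cover the off-diagonal of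
`K × K`, which is Lindelöf. -/
theorem exists_seq_continuousLinearMap_injOn (K : Set X) [SecondCountableTopology K] :
    ∃ φ : ℕ → StrongDual ℝ X, ∀ x ∈ K, ∀ y ∈ K, (∀ n, φ n x = φ n y) → x = y := by
  obtain ⟨T, hTc, hT⟩ := isOpen_iUnion_countable
    (fun φ : StrongDual ℝ X => {p : K × K | φ p.1 ≠ φ p.2})
    fun φ => isOpen_ne_fun (φ.continuous.comp (continuous_subtype_val.comp continuous_fst))
      (φ.continuous.comp (continuous_subtype_val.comp continuous_snd))
  obtain ⟨φ, hφ⟩ := Set.countable_iff_exists_subset_range.mp hTc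
  refine ⟨φ, fun x hx y hy hxy => ?_⟩
  by_contra hne
  obtain ⟨f, hf⟩ := geometric_hahn_banach_point_point hne
  have hmem : ((⟨x, hx⟩, ⟨y, hy⟩) : K × K) ∈ ⋃ ψ ∈ T, {p : K × K | ψ p.1 ≠ ψ p.2} :=
    hT ▸ Set.mem_iUnion.mpr ⟨f, hf.ne⟩
  obtain ⟨ψ, hψT, hψ⟩ := Set.mem_iUnion₂.mp hmem
  obtain ⟨n, rfl⟩ := hφ hψT
  exact hψ (hxy n)

theorem exists_seq_continuousLinearMap_injOn_abs_le_one {K : Set X} (hK : IsCompact K)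
    [MetrizableSpace K] :
    ∃ φ : ℕ → StrongDual ℝ X, (∀ n, ∀ x ∈ K, |φ n x| ≤ 1) ∧
      ∀ x ∈ K, ∀ y ∈ K, (∀ n, φ n x = φ n y) → x = y := by
  have : CompactSpace K := isCompact_iff_compactSpace.mp hK
  obtain ⟨φ, hφ⟩ := exists_seq_continuousLinearMap_injOn K
  choose M hM using fun n => hK.exists_bound_of_continuousOn (φ n).continuous.continuousOn
  refine ⟨fun n => (max (M n) 1)⁻¹ • φ n, fun n x hx => ?_, fun x hx y hy hxy => ?_⟩
  · rw [smul_apply, smul_eq_mul, abs_mul, abs_inv,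
      abs_of_pos (by positivity), inv_mul_le_one₀ (by positivity)]
    exact (hM n x hx).trans (le_max_left _ _)
  · refine hφ x hx y hy fun n => ?_
    have := hxy n
    simp only [smul_apply, smul_eq_mul] at this
    exact mul_left_cancel₀ (by positivity) this

theorem exists_lp_two_embedding {K : Set X} (hK : IsCompact K) [MetrizableSpace K] :
    ∃ j : K → ℓ², Continuous j ∧ Injective j ∧ IsAffineOn K j := by
  obtain ⟨φ, hb, hφ⟩ := exists_seq_continuousLinearMap_injOn_abs_le_one hK
  obtain ⟨j, hj, happ⟩ := exists_continuous_lp_two_apply (g := fun n (x : K) => φ n x)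
    (fun n => (φ n).continuous.comp continuous_subtype_val) fun n x => hb n x x.2
  refine ⟨j, hj, fun x y hxy => Subtype.ext (hφ x x.2 y y.2 fun n => ?_),
    fun a b ha hb l _ _ hm => lp.ext (funext fun n => ?_)⟩
  · have := congrArg (fun v : ℓ² => v n) hxy
    simp only [happ] at this
    exact mul_left_cancel₀ (by positivity) this
  · simp only [lp.coeFn_add, lp.coeFn_smul, Pi.add_apply, Pi.smul_apply, smul_eq_mul, happ,
      map_add, map_smul]
    ring

end LocallyConvex

/-- **Krein–Milman theorem with affine exposed points.** Let `X` be a real Hausdorff locally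
convex space and `K` a nonempty convex compact metrizable subset of `X`. Then the set of
affine exposed points of `K` (points at which some continuous affine map `τ : K → ℝ` attains
a strict maximum over `K`) is nonempty and `K` is the closed convex hull of this set. -/
theorem stmt_11 {X : Type*} [AddCommGroup X] [Module ℝ X] [TopologicalSpace X]
    [IsTopologicalAddGroup X] [ContinuousSMul ℝ X] [LocallyConvexSpace ℝ X] [T2Space X]
    (K : Set X) (hne : K.Nonempty) (hconv : Convex ℝ K) (hcomp : IsCompact K)
    (hmetr : TopologicalSpace.MetrizableSpace K)
    (AExp : Set X)
    (hAExp : AExp = {x : X | ∃ hx : x ∈ K, ∃ τ : K → ℝ, Continuous τ ∧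
      (∀ (a b : X) (ha : a ∈ K) (hb : b ∈ K) (l : ℝ), 0 ≤ l → l ≤ 1 →
        ∀ hm : l • a + (1 - l) • b ∈ K,
          τ ⟨l • a + (1 - l) • b, hm⟩ = l * τ ⟨a, ha⟩ + (1 - l) * τ ⟨b, hb⟩) ∧
      (∀ y : X, ∀ hy : y ∈ K, y ≠ x → τ ⟨y, hy⟩ < τ ⟨x, hx⟩)}) :
    AExp.Nonempty ∧ K = closure (convexHull ℝ AExp) := by
  change AExp = affineExposedPoints K at hAExp
  subst hAExp
  obtain ⟨j, hj, hinj, haff⟩ := exists_lp_two_embedding hcomp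
  exact ⟨affineExposedPoints_nonempty hcomp hne hj hinj haff,
    (closure_convexHull_affineExposedPoints hconv hcomp hj hinj haff).symm⟩
end
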